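/- arXiv:2102.12775 — 11 statements merged into one kernel-verified Lean document; each statement's English description precedes it below -/
import Mathlib

section
/- Let F be a field and A, B nontrivial finite-dimensional associative unital F-algebras. If A ⊗_F B is a central simple F-algebra, then both A and B are central simple F-algebras. -/
open scoped TensorProduct

/-- Simplicity transfers across ring equivalences. -/
lemma isSimpleRing_ofRingEquiv {R S : Type*} [Ring R] [Ring S] (e : R ≃+* S)
    [IsSimpleRing R] : IsSimpleRing S := by
  have : Nontrivial S := e.symm.toEquiv.nontrivial
  refine IsSimpleRing.of_eq_bot_or_eq_top fun I => ?_
  have hI : ∀ x : S, x ∈ I ↔ e.symm x ∈ I.comap (e : R →+* S) := by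
    intro x
    rw [TwoSidedIdeal.mem_comap]
    simp
  rcases IsSimpleRing.simple.eq_bot_or_eq_top (I.comap (e : R →+* S)) with h | h
  · left
    ext x
    rw [hI, h, TwoSidedIdeal.mem_bot, TwoSidedIdeal.mem_bot,
      EmbeddingLike.map_eq_zero_iff]
  · right
    ext x
    rw [hI, h]
    simp [TwoSidedIdeal.mem_top]

/-- Centrality transfers across algebra equivalences. -/
lemma isCentral_ofAlgEquiv {F R S : Type*} [CommSemiring F] [Semiring R] [Semiring S]
    [Algebra F R] [Algebra F S] (e : R ≃ₐ[F] S) (h : Algebra.IsCentral F R) :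
    Algebra.IsCentral F S := by
  refine ⟨fun z hz => ?_⟩
  have hz' : e.symm z ∈ Subalgebra.center F R := by
    rw [Subalgebra.mem_center_iff] at hz ⊢
    intro r
    apply e.injective
    simpa [map_mul] using hz (e r)
  obtain ⟨c, hc⟩ := h.out hz'
  simp only [AlgHom.toRingHom_eq_coe, RingHom.coe_coe, Algebra.ofId_apply] at hc
  refine ⟨c, ?_⟩
  apply e.symm.injective
  simp [Algebra.ofId_apply, AlgEquiv.commutes, hc]

section helper

variable (F A B : Type*) [Field F]
    [Ring A] [Algebra F A] [Nontrivial A]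
    [Ring B] [Algebra F B] [Nontrivial B]

/-- The left factor of a central simple tensor product is central simple. -/
lemma left_factor_central_simple
    (hcentral : Algebra.IsCentral F (A ⊗[F] B))
    (hsimple : IsSimpleRing (A ⊗[F] B)) :
    Algebra.IsCentral F A ∧ IsSimpleRing A := by
  classical
  -- a linear functional on B sending 1 to 1
  obtain ⟨φ₀, hφ₀⟩ : ∃ φ : Module.Dual F B, φ 1 ≠ 0 := by
    by_contra h
    push_neg at h
    exact one_ne_zero ((Module.forall_dual_apply_eq_zero_iff F (1 : B)).1 h)
  set ψ : Module.Dual F B := (φ₀ 1)⁻¹ • φ₀ with hψdef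
  have hψ : ψ 1 = 1 := by
    simp [hψdef, inv_mul_cancel₀ hφ₀]
  -- the contraction map g : A ⊗ B → A, a ⊗ b ↦ ψ b • a
  set g : A ⊗[F] B →ₗ[F] A :=
    (TensorProduct.rid F A).toLinearMap ∘ₗ TensorProduct.map LinearMap.id ψ with hgdef
  have hg : ∀ (a : A) (b : B), g (a ⊗ₜ[F] b) = ψ b • a := by
    intro a b
    simp [hgdef]
  constructor
  · -- centrality
    refine ⟨fun z hz => ?_⟩
    have hz1 : (z ⊗ₜ[F] (1 : B)) ∈ Subalgebra.center F (A ⊗[F] B) := by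
      rw [Subalgebra.mem_center_iff]
      intro w
      induction w using TensorProduct.induction_on with
      | zero => simp
      | tmul a b =>
        rw [Subalgebra.mem_center_iff] at hz
        simp [Algebra.TensorProduct.tmul_mul_tmul, hz a]
      | add x y hx hy => rw [add_mul, mul_add, hx, hy]
    obtain ⟨c, hc⟩ := hcentral.out hz1
    simp only [AlgHom.toRingHom_eq_coe, RingHom.coe_coe, Algebra.ofId_apply] at hc
    refine ⟨c, ?_⟩
    have hc' : (algebraMap F A c) ⊗ₜ[F] (1 : B) = z ⊗ₜ[F] (1 : B) := by
      rw [← hc, Algebra.TensorProduct.algebraMap_apply]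
    have := congrArg g hc'
    simpa [hg, hψ] using this
  · -- simplicity
    refine IsSimpleRing.of_eq_bot_or_eq_top fun I => ?_
    rcases eq_or_ne I ⊥ with h | h
    · exact Or.inl h
    right
    obtain ⟨x, hxI, hx0⟩ : ∃ x ∈ I, x ≠ 0 := by
      by_contra hcon
      push_neg at hcon
      refine h ?_
      ext y
      rw [TwoSidedIdeal.mem_bot]
      exact ⟨fun hy => hcon y hy, fun hy => hy ▸ I.zero_mem⟩
    -- the span of pure tensors with left entry in I
    set S : Submodule F (A ⊗[F] B) :=
      Submodule.span F {y : A ⊗[F] B | ∃ c ∈ I, ∃ d : B, y = c ⊗ₜ[F] d} with hSdef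
    have gen_mem : ∀ c ∈ I, ∀ d : B, c ⊗ₜ[F] d ∈ S := fun c hc d =>
      Submodule.subset_span ⟨c, hc, d, rfl⟩
    have mul_left_mem : ∀ (w y : A ⊗[F] B), y ∈ S → w * y ∈ S := by
      intro w y hy
      induction hy using Submodule.span_induction with
      | mem y hy =>
        obtain ⟨c, hc, d, rfl⟩ := hy
        induction w using TensorProduct.induction_on with
        | zero => simpa using S.zero_mem
        | tmul a b =>
          rw [Algebra.TensorProduct.tmul_mul_tmul]
          exact gen_mem _ (I.mul_mem_left a c hc) _
        | add u v hu hv => rw [add_mul]; exact S.add_mem hu hv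
      | zero => simpa using S.zero_mem
      | add u v _ _ hu hv => rw [mul_add]; exact S.add_mem hu hv
      | smul r u _ hu => rw [mul_smul_comm]; exact S.smul_mem r hu
    have mul_right_mem : ∀ (w y : A ⊗[F] B), y ∈ S → y * w ∈ S := by
      intro w y hy
      induction hy using Submodule.span_induction with
      | mem y hy =>
        obtain ⟨c, hc, d, rfl⟩ := hy
        induction w using TensorProduct.induction_on with
        | zero => simpa using S.zero_mem
        | tmul a b =>
          rw [Algebra.TensorProduct.tmul_mul_tmul]
          exact gen_mem _ (I.mul_mem_right c a hc) _
        | add u v hu hv => rw [mul_add]; exact S.add_mem hu hv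
      | zero => simpa using S.zero_mem
      | add u v _ _ hu hv => rw [add_mul]; exact S.add_mem hu hv
      | smul r u _ hu => rw [smul_mul_assoc]; exact S.smul_mem r hu
    set J : TwoSidedIdeal (A ⊗[F] B) := TwoSidedIdeal.mk' S S.zero_mem
      (fun ha hb => S.add_mem ha hb) (fun ha => S.neg_mem ha)
      (fun {w y} hy => mul_left_mem w y hy) (fun {w y} hw => mul_right_mem y w hw) with hJdef
    have memJ : ∀ y, y ∈ J ↔ y ∈ S := fun y => TwoSidedIdeal.mem_mk' _ _ _ _ _ _ y
    have hJne : J ≠ ⊥ := by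
      intro hbot
      have hmem : x ⊗ₜ[F] (1 : B) ∈ J := (memJ _).2 (gen_mem x hxI 1)
      rw [hbot, TwoSidedIdeal.mem_bot] at hmem
      have := congrArg g hmem
      simp only [hg, hψ, one_smul, map_zero] at this
      exact hx0 this
    have hJtop : J = ⊤ := (IsSimpleRing.simple.eq_bot_or_eq_top J).resolve_left hJne
    have h1S : (1 : A ⊗[F] B) ∈ S := (memJ _).1 (hJtop ▸ TwoSidedIdeal.mem_top _)
    -- push down through g
    have gS : ∀ y ∈ S, g y ∈ I := by
      intro y hy
      induction hy using Submodule.span_induction with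
      | mem y hy =>
        obtain ⟨c, hc, d, rfl⟩ := hy
        rw [hg, Algebra.smul_def]
        exact I.mul_mem_left _ _ hc
      | zero => simpa using I.zero_mem
      | add u v _ _ hu hv => rw [map_add]; exact I.add_mem hu hv
      | smul r u _ hu =>
        rw [map_smul, Algebra.smul_def]
        exact I.mul_mem_left _ _ hu
    have h1 : (1 : A) ∈ I := by
      have := gS _ h1S
      rwa [Algebra.TensorProduct.one_def, hg, hψ, one_smul] at this
    exact TwoSidedIdeal.eq_top I h1

end helper

/-- If `A ⊗[F] B` is a central simple `F`-algebra, then both `A` and `B` are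
central simple `F`-algebras. -/
theorem tensor_central_simple_of_central_simple
    (F A B : Type*) [Field F]
    [Ring A] [Algebra F A] [FiniteDimensional F A] [Nontrivial A]
    [Ring B] [Algebra F B] [FiniteDimensional F B] [Nontrivial B]
    (hcentral : Algebra.IsCentral F (A ⊗[F] B))
    (hsimple : IsSimpleRing (A ⊗[F] B)) :
    Algebra.IsCentral F A ∧ IsSimpleRing A ∧ Algebra.IsCentral F B ∧ IsSimpleRing B := by
  obtain ⟨hA1, hA2⟩ := left_factor_central_simple F A B hcentral hsimple
  have e := Algebra.TensorProduct.comm F A B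
  have hcentral' : Algebra.IsCentral F (B ⊗[F] A) := isCentral_ofAlgEquiv e hcentral
  have hsimple' : IsSimpleRing (B ⊗[F] A) := isSimpleRing_ofRingEquiv e.toRingEquiv
  obtain ⟨hB1, hB2⟩ := left_factor_central_simple F B A hcentral' hsimple'
  exact ⟨hA1, hA2, hB1, hB2⟩
end

section
/- Let F be a field, K a field extension of F (not necessarily finite over F), and A a nontrivial finite-dimensional associative unital F-algebra. Then A is a central simple F-algebra if and only if K ⊗_F A is a central simple K-algebra. -/
/-!
Write elements of `K ⊗[F] A` as `∑ᵢ bᵢ ⊗ aᵢ` for an `F`-basis `(bᵢ)` of `K`. Multiplication by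
`1 ⊗ a` on either side acts on the coordinates `aᵢ`, so an element commuting with `1 ⊗ A` has
central, hence scalar, coordinates and lies in `K ⊗ 1`. Given a nonzero ideal `J` of `K ⊗[F] A`,
take `y ∈ J` with the fewest nonzero coordinates; by simplicity of `A` the `i`-th coordinates of
elements of `J` supported where `y` is form all of `A`, giving `w ∈ J` with `wᵢ = 1`. The
commutators of `w` with `1 ⊗ A` lie in `J` and have fewer nonzero coordinates, so they vanish and
`w` is a nonzero element of `K`, a unit. Conversely, `A ↪ K ⊗[F] A` and `A ⧸ I ↪ K ⊗[F] (A ⧸ I)`,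
so centrality and simplicity descend from `K ⊗[F] A` to `A`.
-/

open scoped TensorProduct

namespace TensorProduct

section Coordinates

variable {F K A : Type*} [Field F] [CommRing K] [Algebra F K] [Ring A] [Algebra F A]
  {ι : Type*} [DecidableEq ι] (ℬ : Module.Basis ι F K)

theorem equivFinsuppOfBasisLeft_one_tmul_mul_apply (b : A) (x : K ⊗[F] A) (i : ι) :
    equivFinsuppOfBasisLeft ℬ ((1 ⊗ₜ[F] b) * x) i = b * equivFinsuppOfBasisLeft ℬ x i := by
  induction x using TensorProduct.induction_on with
  | zero => simp
  | tmul k a => simp [Algebra.TensorProduct.tmul_mul_tmul]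
  | add x y hx hy => simp only [mul_add, map_add, Finsupp.add_apply, hx, hy]

theorem equivFinsuppOfBasisLeft_mul_one_tmul_apply (b : A) (x : K ⊗[F] A) (i : ι) :
    equivFinsuppOfBasisLeft ℬ (x * (1 ⊗ₜ[F] b)) i = equivFinsuppOfBasisLeft ℬ x i * b := by
  induction x using TensorProduct.induction_on with
  | zero => simp
  | tmul k a => simp [Algebra.TensorProduct.tmul_mul_tmul]
  | add x y hx hy => simp only [add_mul, map_add, Finsupp.add_apply, hx, hy]

theorem mem_bot_of_equivFinsuppOfBasisLeft_mem_bot {x : K ⊗[F] A}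
    (h : ∀ i, equivFinsuppOfBasisLeft ℬ x i ∈ (⊥ : Subalgebra F A)) :
    x ∈ (⊥ : Subalgebra K (K ⊗[F] A)) := by
  rw [← (equivFinsuppOfBasisLeft ℬ).symm_apply_apply x, equivFinsuppOfBasisLeft_symm_apply]
  refine Subalgebra.sum_mem _ fun i _ => ?_
  obtain ⟨c, hc⟩ := Algebra.mem_bot.1 (h i)
  refine Algebra.mem_bot.2 ⟨c • ℬ i, ?_⟩
  rw [← hc, Algebra.TensorProduct.algebraMap_apply, Algebra.algebraMap_self, RingHom.id_apply,
    Algebra.algebraMap_eq_smul_one, TensorProduct.smul_tmul]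

theorem support_commutator_subset_erase {w : K ⊗[F] A} {i : ι}
    (hw : equivFinsuppOfBasisLeft ℬ w i = 1) (b : A) :
    (equivFinsuppOfBasisLeft ℬ ((1 ⊗ₜ[F] b) * w - w * (1 ⊗ₜ[F] b))).support ⊆
      (equivFinsuppOfBasisLeft ℬ w).support.erase i := by
  intro j hj
  rw [Finsupp.mem_support_iff, map_sub, Finsupp.sub_apply,
    equivFinsuppOfBasisLeft_one_tmul_mul_apply, equivFinsuppOfBasisLeft_mul_one_tmul_apply] at hj
  refine Finset.mem_erase.2 ⟨?_, Finsupp.mem_support_iff.2 fun h0 => hj (by simp [h0])⟩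
  rintro rfl
  exact hj (by simp [hw])

def componentIdeal (J : TwoSidedIdeal (K ⊗[F] A)) (s : Finset ι) (i : ι) : TwoSidedIdeal A :=
  .mk' {a | ∃ w ∈ J, (equivFinsuppOfBasisLeft ℬ w).support ⊆ s ∧ equivFinsuppOfBasisLeft ℬ w i = a}
    ⟨0, J.zero_mem, by simp, by simp⟩
    (by
      rintro _ _ ⟨w₁, h₁, hs₁, rfl⟩ ⟨w₂, h₂, hs₂, rfl⟩
      refine ⟨w₁ + w₂, J.add_mem h₁ h₂, ?_, by simp⟩
      rw [map_add]
      exact Finsupp.support_add.trans (Finset.union_subset hs₁ hs₂))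
    (by
      rintro _ ⟨w, hw, hs, rfl⟩
      exact ⟨-w, J.neg_mem hw, by simpa using hs, by simp⟩)
    (by
      rintro b _ ⟨w, hw, hs, rfl⟩
      refine ⟨(1 ⊗ₜ[F] b) * w, J.mul_mem_left _ _ hw, fun j hj => hs ?_,
        equivFinsuppOfBasisLeft_one_tmul_mul_apply ℬ b w i⟩
      rw [Finsupp.mem_support_iff, equivFinsuppOfBasisLeft_one_tmul_mul_apply] at hj
      exact Finsupp.mem_support_iff.2 (right_ne_zero_of_mul hj))
    (by
      rintro _ b ⟨w, hw, hs, rfl⟩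
      refine ⟨w * (1 ⊗ₜ[F] b), J.mul_mem_right _ _ hw, fun j hj => hs ?_,
        equivFinsuppOfBasisLeft_mul_one_tmul_apply ℬ b w i⟩
      rw [Finsupp.mem_support_iff, equivFinsuppOfBasisLeft_mul_one_tmul_apply] at hj
      exact Finsupp.mem_support_iff.2 (left_ne_zero_of_mul hj))

theorem mem_componentIdeal {J : TwoSidedIdeal (K ⊗[F] A)} {s : Finset ι} {i : ι} {a : A} :
    a ∈ componentIdeal ℬ J s i ↔
      ∃ w ∈ J, (equivFinsuppOfBasisLeft ℬ w).support ⊆ s ∧ equivFinsuppOfBasisLeft ℬ w i = a :=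
  TwoSidedIdeal.mem_mk' ..

theorem exists_mem_support_subset_apply_eq_one [IsSimpleRing A] {J : TwoSidedIdeal (K ⊗[F] A)}
    {y : K ⊗[F] A} (hy : y ∈ J) {i : ι} (hi : equivFinsuppOfBasisLeft ℬ y i ≠ 0) :
    ∃ w ∈ J, (equivFinsuppOfBasisLeft ℬ w).support ⊆ (equivFinsuppOfBasisLeft ℬ y).support ∧
      equivFinsuppOfBasisLeft ℬ w i = 1 :=
  (mem_componentIdeal ℬ).1 <| IsSimpleRing.one_mem_of_ne_zero_mem _ hi <|
    (mem_componentIdeal ℬ).2 ⟨y, hy, subset_rfl, rfl⟩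

end Coordinates

variable {F A : Type*} [Field F] [Ring A] [Algebra F A]

theorem mem_bot_of_tmul_one_eq_one_tmul {K : Type*} [Ring K] [Nontrivial K] [Algebra F K]
    {k : K} {a : A} (h : k ⊗ₜ[F] (1 : A) = (1 : K) ⊗ₜ[F] a) : a ∈ (⊥ : Subalgebra F A) := by
  obtain ⟨φ, hφ⟩ := Module.Projective.exists_dual_eq_one F (one_ne_zero : (1 : K) ≠ 0)
  have := congr(TensorProduct.lid F A (φ.rTensor A $h))
  simp only [LinearMap.rTensor_tmul, TensorProduct.lid_tmul, hφ, one_smul] at this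
  exact Algebra.mem_bot.2 ⟨φ k, by rw [Algebra.algebraMap_eq_smul_one, this]⟩

theorem mem_bot_of_forall_commute_one_tmul {K : Type*} [CommRing K] [Algebra F K]
    [Algebra.IsCentral F A] {x : K ⊗[F] A} (hx : ∀ b : A, (1 ⊗ₜ[F] b) * x = x * (1 ⊗ₜ[F] b)) :
    x ∈ (⊥ : Subalgebra K (K ⊗[F] A)) := by
  classical
  let ℬ := Module.Basis.ofVectorSpace F K
  refine mem_bot_of_equivFinsuppOfBasisLeft_mem_bot ℬ fun i => Algebra.IsCentral.out ?_
  refine Subalgebra.mem_center_iff.2 fun b => ?_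
  simpa only [equivFinsuppOfBasisLeft_one_tmul_mul_apply,
    equivFinsuppOfBasisLeft_mul_one_tmul_apply] using congr(equivFinsuppOfBasisLeft ℬ $(hx b) i)

theorem one_mem_of_ne_zero_mem {K : Type*} [Field K] [Algebra F K] [Algebra.IsCentral F A]
    [IsSimpleRing A] (J : TwoSidedIdeal (K ⊗[F] A)) {y : K ⊗[F] A} (hy : y ∈ J) (hy0 : y ≠ 0) :
    1 ∈ J := by
  classical
  let ℬ := Module.Basis.ofVectorSpace F K
  induction hn : (equivFinsuppOfBasisLeft ℬ y).support.card using Nat.strong_induction_on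
    generalizing y with
  | _ n ih =>
  obtain ⟨i, hi⟩ :=
    Finsupp.support_nonempty_iff.2 ((equivFinsuppOfBasisLeft ℬ).map_ne_zero_iff.2 hy0)
  obtain ⟨w, hwJ, hws, hw1⟩ :=
    exists_mem_support_subset_apply_eq_one ℬ hy (Finsupp.mem_support_iff.1 hi)
  by_cases hcomm : ∀ b : A, (1 ⊗ₜ[F] b) * w = w * (1 ⊗ₜ[F] b)
  · obtain ⟨k, rfl⟩ := Algebra.mem_bot.1 (mem_bot_of_forall_commute_one_tmul hcomm)
    have hk : k ≠ 0 := by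
      rintro rfl
      simp at hw1
    rw [← map_one (algebraMap K _), ← inv_mul_cancel₀ hk, map_mul]
    exact J.mul_mem_left _ _ hwJ
  · obtain ⟨b, hb⟩ := not_forall.1 hcomm
    refine ih _ ?_ (J.sub_mem (J.mul_mem_left _ _ hwJ) (J.mul_mem_right _ _ hwJ))
      (sub_ne_zero.2 hb) rfl
    calc _ ≤ ((equivFinsuppOfBasisLeft ℬ w).support.erase i).card :=
          Finset.card_le_card (support_commutator_subset_erase ℬ hw1 b)
      _ < (equivFinsuppOfBasisLeft ℬ w).support.card :=
          Finset.card_erase_lt_of_mem (Finsupp.mem_support_iff.2 (by simp [hw1]))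
      _ ≤ n := hn ▸ Finset.card_le_card hws

end TensorProduct

section BaseChange

variable {F K A : Type*} [Field F] [Ring A] [Algebra F A]

theorem Algebra.IsCentral.baseChange [CommRing K] [Algebra F K] [Algebra.IsCentral F A] :
    Algebra.IsCentral K (K ⊗[F] A) :=
  ⟨fun _ hz => TensorProduct.mem_bot_of_forall_commute_one_tmul fun _ =>
    Subalgebra.mem_center_iff.1 hz _⟩

theorem IsSimpleRing.baseChange [Field K] [Algebra F K] [Algebra.IsCentral F A]
    [IsSimpleRing A] : IsSimpleRing (K ⊗[F] A) := by
  have := Algebra.TensorProduct.nontrivial_of_algebraMap_injective_of_flat_right F K A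
    (algebraMap F K).injective
  refine .of_eq_bot_or_eq_top fun J => or_iff_not_imp_left.2 fun hJ => ?_
  obtain ⟨y, hy, hy0⟩ : ∃ y ∈ J, y ≠ 0 := by
    by_contra! h
    exact hJ (eq_bot_iff.2 fun y hy => (TwoSidedIdeal.mem_bot _).2 (h y hy))
  exact J.one_mem_iff.1 (TensorProduct.one_mem_of_ne_zero_mem J hy hy0)

variable [CommRing K] [Nontrivial K] [Algebra F K]

theorem Algebra.IsCentral.of_baseChange [Algebra.IsCentral K (K ⊗[F] A)] :
    Algebra.IsCentral F A where
  out z hz := by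
    have h : (1 : K) ⊗ₜ[F] z ∈ Subalgebra.center K (K ⊗[F] A) :=
      Subalgebra.mem_center_iff.2 <| Subalgebra.mem_center_iff.1 <|
        Algebra.TensorProduct.includeRight_map_center_le F K A ⟨z, hz, rfl⟩
    obtain ⟨k, hk⟩ := Algebra.IsCentral.out h
    exact TensorProduct.mem_bot_of_tmul_one_eq_one_tmul hk

theorem IsSimpleRing.of_baseChange [IsSimpleRing (K ⊗[F] A)] : IsSimpleRing A := by
  have : Nontrivial A :=
    (subsingleton_or_nontrivial A).resolve_left fun _ => not_subsingleton (K ⊗[F] A) inferInstance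
  refine .of_eq_bot_or_eq_top fun I => ?_
  let π := Algebra.TensorProduct.map (AlgHom.id K K) (I.ringCon.mkₐ F)
  rcases injective_ringHom_or_subsingleton_codomain π.toRingHom with hπ | hQ
  · refine .inl (eq_bot_iff.2 fun a ha => (TwoSidedIdeal.mem_bot A).2 ?_)
    refine Algebra.TensorProduct.includeRight_injective (A := K) (algebraMap F K).injective (hπ ?_)
    simpa [π] using (RingCon.eq _).2 ((I.mem_iff a).1 ha)
  · have : Subsingleton I.ringCon.Quotient :=
      (Algebra.TensorProduct.includeRight_injective (A := K)
        (algebraMap F K).injective).subsingleton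
    exact .inr (eq_top_iff.2 fun a _ =>
      (I.mem_iff a).2 ((RingCon.eq _).1 (Subsingleton.elim (a : I.ringCon.Quotient) 0)))

end BaseChange

theorem central_simple_iff_baseChange_central_simple_general
    (F K A : Type*) [Field F] [Field K] [Algebra F K]
    [Ring A] [Algebra F A] :
    (Algebra.IsCentral F A ∧ IsSimpleRing A) ↔
      (Algebra.IsCentral K (K ⊗[F] A) ∧ IsSimpleRing (K ⊗[F] A)) := by
  constructor
  · rintro ⟨_, _⟩
    exact ⟨.baseChange, .baseChange⟩
  · rintro ⟨_, _⟩
    exact ⟨.of_baseChange (K := K), .of_baseChange (F := F) (K := K)⟩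

/-- Let `K` be a field extension of `F` and `A` a nontrivial finite-dimensional
`F`-algebra.  Then `A` is central simple over `F` if and only if `K ⊗[F] A` is
central simple over `K`. -/
theorem central_simple_iff_baseChange_central_simple
    (F K A : Type*) [Field F] [Field K] [Algebra F K]
    [Ring A] [Algebra F A] [FiniteDimensional F A] [Nontrivial A] :
    (Algebra.IsCentral F A ∧ IsSimpleRing A) ↔
      (Algebra.IsCentral K (K ⊗[F] A) ∧ IsSimpleRing (K ⊗[F] A)) :=
  central_simple_iff_baseChange_central_simple_general F K A
end

section
/- Wedderburn's theorem, constructive form: let F be a field and A a nontrivial finite-dimensional simple F-algebra. If A contains an element that is nonzero and not invertible, then there exist an integer q > 1 and a nontrivial finite-dimensional simple F-algebra B such that A is isomorphic as an F-algebra to the matrix algebra M_q(B). Moreover, if A is central (its center equals F·1), then B can be chosen central as well. -/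
/-! By Wedderburn–Artin, `A ≃ₐ[F] M_q(D)` for a finite-dimensional division algebra `D`. If `q = 1`
then `A ≅ D` is a division ring, which has no nonzero non-units; and since the centre of `M_q(D)`
is the image of the centre of `D` under the scalar embedding, `D` is central whenever `A` is. -/

universe u v

theorem Algebra.IsCentral.of_matrix (K D ι : Type*) [CommSemiring K] [Semiring D] [Algebra K D]
    [Fintype ι] [DecidableEq ι] [Nonempty ι] [Algebra.IsCentral K (Matrix ι ι D)] :
    Algebra.IsCentral K D where
  out x hx := by
    have hscalar : Matrix.scalarAlgHom ι K x ∈ Subalgebra.center K (Matrix ι ι D) := by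
      rw [Matrix.subalgebraCenter_eq_scalarAlgHom_map]
      exact Subalgebra.mem_map.mpr ⟨x, hx, rfl⟩
    obtain ⟨c, hc⟩ := (Algebra.IsCentral.mem_center_iff K).mp hscalar
    exact Algebra.mem_bot.mpr ⟨c, (Matrix.scalar_inj (n := ι)).mp hc.symm⟩

theorem one_lt_of_ringEquiv_matrix_divisionRing {R D : Type*} [Ring R] [DivisionRing D] {n : ℕ}
    [NeZero n] (e : R ≃+* Matrix (Fin n) (Fin n) D) {a : R} (ha : a ≠ 0) (hau : ¬IsUnit a) :
    1 < n := by
  obtain rfl | hn := (Nat.one_le_iff_ne_zero.mpr (NeZero.ne n)).eq_or_lt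
  · let e₁ : R ≃+* D := e.trans Matrix.uniqueRingEquiv
    exact absurd ((isUnit_map_iff e₁ a).mp (isUnit_iff_ne_zero.mpr (e₁.map_ne_zero_iff.mpr ha))) hau
  · exact hn

theorem wedderburn_constructive_general
    (F : Type u) (A : Type v) [Field F] [Ring A] [Algebra F A]
    [FiniteDimensional F A] [IsSimpleRing A]
    (h : ∃ a : A, a ≠ 0 ∧ ¬ IsUnit a) :
    ∃ (q : ℕ) (B : Type v) (_ : Ring B) (_ : Algebra F B),
      1 < q ∧ Nontrivial B ∧ FiniteDimensional F B ∧ IsSimpleRing B ∧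
      Nonempty (A ≃ₐ[F] Matrix (Fin q) (Fin q) B) ∧
      (Algebra.IsCentral F A → Algebra.IsCentral F B) := by
  have : IsArtinianRing A := isArtinian_of_tower F inferInstance
  obtain ⟨q, _, D, _, _, _, ⟨e⟩⟩ := IsSimpleRing.exists_algEquiv_matrix_divisionRing_finite F A
  obtain ⟨a, ha, hau⟩ := h
  refine ⟨q, D, inferInstance, inferInstance,
    one_lt_of_ringEquiv_matrix_divisionRing e.toRingEquiv ha hau, inferInstance, inferInstance,
    inferInstance, ⟨e⟩, fun _ ↦ ?_⟩
  have : Algebra.IsCentral F (Matrix (Fin q) (Fin q) D) := .of_algEquiv F A _ e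
  exact .of_matrix F D (Fin q)

/-- Wedderburn's theorem, constructive form: if a nontrivial finite-dimensional
simple `F`-algebra `A` contains a nonzero noninvertible element, then
`A ≅ M_q(B)` for some `q > 1` and some nontrivial finite-dimensional simple
`F`-algebra `B`; moreover, if `A` is central then `B` may be chosen central. -/
theorem wedderburn_constructive
    (F : Type u) (A : Type v) [Field F] [Ring A] [Algebra F A]
    [FiniteDimensional F A] [Nontrivial A] [IsSimpleRing A]
    (h : ∃ a : A, a ≠ 0 ∧ ¬ IsUnit a) :
    ∃ (q : ℕ) (B : Type v) (_ : Ring B) (_ : Algebra F B),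
      1 < q ∧ Nontrivial B ∧ FiniteDimensional F B ∧ IsSimpleRing B ∧
      Nonempty (A ≃ₐ[F] Matrix (Fin q) (Fin q) B) ∧
      (Algebra.IsCentral F A → Algebra.IsCentral F B) :=
  wedderburn_constructive_general F A h
end

section
/- Let F be a field, A a nontrivial finite-dimensional simple F-algebra, and a a nonzero element of A such that the left ideal A·a is a proper left ideal (A·a ≠ A). Then the left ideal A·a contains a nonzero idempotent e with e ≠ 1 (equivalently, A contains a nontrivial idempotent lying in A·a). -/
theorem IsSemisimpleRing.exists_isIdempotentElem_mem_ne_zero_ne_one {R : Type*} [Ring R]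
    [IsSemisimpleRing R] (I : Ideal R) (h_bot : I ≠ ⊥) (h_top : I ≠ ⊤) :
    ∃ e ∈ I, IsIdempotentElem e ∧ e ≠ 0 ∧ e ≠ 1 := by
  obtain ⟨e, he, rfl⟩ := IsSemisimpleRing.ideal_eq_span_idempotent I
  refine ⟨e, Ideal.mem_span_singleton_self e, he, ?_, ?_⟩
  · rintro rfl
    exact h_bot (Ideal.span_singleton_eq_bot.mpr rfl)
  · rintro rfl
    exact h_top Ideal.span_singleton_one

theorem exists_nontrivial_idempotent_in_proper_left_ideal_general
    (F A : Type*) [Field F] [Ring A] [Algebra F A] [FiniteDimensional F A]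
    [IsSimpleRing A]
    (a : A) (ha : a ≠ 0) (hproper : Ideal.span {a} ≠ (⊤ : Ideal A)) :
    ∃ e ∈ Ideal.span {a}, e * e = e ∧ e ≠ 0 ∧ e ≠ 1 := by
  -- A simple Artinian ring is semisimple (Wedderburn); Mathlib provides this as an instance.
  have : IsArtinianRing A := IsArtinianRing.of_finite F A
  exact IsSemisimpleRing.exists_isIdempotentElem_mem_ne_zero_ne_one _
    (by rwa [Ne, Ideal.span_singleton_eq_bot]) hproper

/-- If `A` is a nontrivial finite-dimensional simple `F`-algebra and `a ∈ A` is a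
nonzero element generating a proper left ideal `A·a`, then the left ideal `A·a`
contains a nontrivial idempotent. -/
theorem exists_nontrivial_idempotent_in_proper_left_ideal
    (F A : Type*) [Field F] [Ring A] [Algebra F A] [FiniteDimensional F A]
    [Nontrivial A] [IsSimpleRing A]
    (a : A) (ha : a ≠ 0) (hproper : Ideal.span {a} ≠ (⊤ : Ideal A)) :
    ∃ e ∈ Ideal.span {a}, e * e = e ∧ e ≠ 0 ∧ e ≠ 1 :=
  exists_nontrivial_idempotent_in_proper_left_ideal_general F A a ha hproper
end

section
/- Let F be a field, A a central simple F-algebra, and B a subalgebra of A that is isomorphic as an F-algebra to a matrix algebra M_q(F). Let C be the centralizer of B in A. Then the natural F-algebra homomorphism B ⊗_F C → A (induced by multiplication) is an isomorphism; consequently A is isomorphic as an F-algebra to M_q(C). -/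
/-!
The images `E i j` of the matrix units of `M_n(R)` satisfy `E i j * E k l = δ j k • E i l` and
`∑ i, E i i = 1`. For `a : A`, the element `∑ k, E k i * a * E j k` commutes with every `E s t`,
hence lies in the centralizer `C`, and `a = ∑ i j, E i j * (∑ k, E k i * a * E j k)`; for
`s ∈ S` and `c ∈ C` this coefficient of `s * c` is the scalar `(i, j)`-entry of `s` times `c`.
So `a ↦ ∑ i j, E i j ⊗ (∑ k, E k i * a * E j k)` inverts the multiplication map `S ⊗ C → A`.
-/

open scoped TensorProduct

theorem Matrix.sum_single_mul_mul_single {R n : Type*} [CommSemiring R] [Fintype n]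
    [DecidableEq n] (M : Matrix n n R) (i j : n) :
    ∑ k, Matrix.single k i 1 * M * Matrix.single j k 1 = algebraMap R (Matrix n n R) (M i j) := by
  simp [Matrix.single_mul_mul_single, Matrix.sum_single_eq_diagonal, Matrix.algebraMap_eq_diagonal]

namespace Subalgebra

variable {R A n : Type*} [CommSemiring R] [Semiring A] [Algebra R A] [Fintype n] [DecidableEq n]
  {S : Subalgebra R A}

variable (S) in
def mulCentralizer : S ⊗[R] centralizer R (S : Set A) →ₐ[R] A :=
  Algebra.TensorProduct.lift S.val (centralizer R (S : Set A)).val fun s c => c.2 s.1 s.2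

@[simp]
lemma mulCentralizer_tmul (s : S) (c : centralizer R (S : Set A)) :
    mulCentralizer S (s ⊗ₜ c) = s * c :=
  rfl

section MatrixUnits

variable (e : Matrix n n R ≃ₐ[R] S)

def matrixUnit (i j : n) : A := e (Matrix.single i j 1)

lemma matrixUnit_mul_matrixUnit (i j k l : n) :
    matrixUnit e i j * matrixUnit e k l = if j = k then matrixUnit e i l else 0 := by
  split_ifs with h
  · subst h; simp [matrixUnit, ← MulMemClass.coe_mul, ← map_mul]
  · simp [matrixUnit, ← MulMemClass.coe_mul, ← map_mul, h]

lemma sum_matrixUnit_self : ∑ i, matrixUnit e i i = 1 := by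
  simp [matrixUnit, ← AddSubmonoidClass.coe_finsetSum, ← map_sum, Matrix.sum_single_one]

lemma eq_sum_smul_single (s : S) : s = ∑ i, ∑ j, e.symm s i j • e (Matrix.single i j 1) := by
  conv_lhs => rw [← e.apply_symm_apply s, Matrix.matrix_eq_sum_single (e.symm s)]
  simp [← map_smul, Matrix.smul_single]

lemma coe_eq_sum_smul_matrixUnit (s : S) :
    (s : A) = ∑ i, ∑ j, e.symm s i j • matrixUnit e i j := by
  conv_lhs => rw [eq_sum_smul_single e s]
  simp [matrixUnit]

lemma sum_matrixUnit_mul_coe_mul_matrixUnit (s : S) (i j : n) :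
    ∑ k, matrixUnit e k i * s * matrixUnit e j k = algebraMap R A (e.symm s i j) := by
  calc ∑ k, matrixUnit e k i * s * matrixUnit e j k
      = e (∑ k, Matrix.single k i 1 * e.symm s * Matrix.single j k 1) := by
        simp only [matrixUnit, map_sum, map_mul, AlgEquiv.apply_symm_apply,
          AddSubmonoidClass.coe_finsetSum, MulMemClass.coe_mul]
    _ = algebraMap R A (e.symm s i j) := by
        rw [Matrix.sum_single_mul_mul_single, AlgEquiv.commutes]; rfl

lemma mem_centralizer_of_forall_commute_matrixUnit {x : A}
    (hx : ∀ i j, Commute (matrixUnit e i j) x) : x ∈ centralizer R (S : Set A) := by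
  intro s hs
  have : Commute s x := by
    lift s to S using hs
    rw [coe_eq_sum_smul_matrixUnit e s]
    exact .sum_left _ _ _ fun i _ => .sum_left _ _ _ fun j _ => (hx i j).smul_left _
  exact this.eq

lemma matrixUnit_mul_sum_mul_mul_matrixUnit (a : A) (i j s t : n) :
    matrixUnit e s t * ∑ k, matrixUnit e k i * a * matrixUnit e j k =
      matrixUnit e s i * a * matrixUnit e j t := by
  simp [Finset.mul_sum, ← mul_assoc, matrixUnit_mul_matrixUnit]

lemma sum_mul_mul_matrixUnit_mul_matrixUnit (a : A) (i j s t : n) :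
    (∑ k, matrixUnit e k i * a * matrixUnit e j k) * matrixUnit e s t =
      matrixUnit e s i * a * matrixUnit e j t := by
  simp [Finset.sum_mul, mul_assoc, matrixUnit_mul_matrixUnit]

/-- The `(i, j)` entry of `a` under `A ≃ M_n(C)`. -/
def centralizerEntry (i j : n) : A →ₗ[R] centralizer R (S : Set A) where
  toFun a := ⟨∑ k, matrixUnit e k i * a * matrixUnit e j k,
    mem_centralizer_of_forall_commute_matrixUnit e fun s t => by
      rw [Commute, SemiconjBy, matrixUnit_mul_sum_mul_mul_matrixUnit,
        sum_mul_mul_matrixUnit_mul_matrixUnit]⟩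
  map_add' a b := by ext; simp [mul_add, add_mul, Finset.sum_add_distrib]
  map_smul' r a := by ext; simp [Finset.smul_sum]

@[simp]
lemma coe_centralizerEntry (i j : n) (a : A) :
    (centralizerEntry e i j a : A) = ∑ k, matrixUnit e k i * a * matrixUnit e j k :=
  rfl

lemma centralizerEntry_mul (s : S) (c : centralizer R (S : Set A)) (i j : n) :
    centralizerEntry e i j (s * c) = e.symm s i j • c := by
  ext
  have hc (k : n) : matrixUnit e j k * c = c * matrixUnit e j k := c.2 _ (e _).2
  calc ∑ k, matrixUnit e k i * (s * c) * matrixUnit e j k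
      = (∑ k, matrixUnit e k i * s * matrixUnit e j k) * c := by
        simp only [Finset.sum_mul, mul_assoc, hc]
    _ = _ := by rw [sum_matrixUnit_mul_coe_mul_matrixUnit, ← Algebra.smul_def]; rfl

def mulCentralizerInv : A →ₗ[R] S ⊗[R] centralizer R (S : Set A) :=
  ∑ i, ∑ j, (TensorProduct.mk R S _ (e (Matrix.single i j 1))).comp (centralizerEntry e i j)

lemma mulCentralizerInv_apply (a : A) :
    mulCentralizerInv e a = ∑ i, ∑ j, e (Matrix.single i j 1) ⊗ₜ centralizerEntry e i j a := by
  simp [mulCentralizerInv, LinearMap.sum_apply]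

lemma mulCentralizer_mulCentralizerInv (a : A) : mulCentralizer S (mulCentralizerInv e a) = a := by
  have (i j : n) : matrixUnit e i j * centralizerEntry e i j a =
      matrixUnit e i i * a * matrixUnit e j j := by
    rw [coe_centralizerEntry, matrixUnit_mul_sum_mul_mul_matrixUnit]
  simp only [mulCentralizerInv_apply, map_sum, mulCentralizer_tmul]
  calc ∑ i, ∑ j, matrixUnit e i j * centralizerEntry e i j a
      = ∑ i, ∑ j, matrixUnit e i i * a * matrixUnit e j j := by simp only [this]
    _ = (∑ i, matrixUnit e i i) * a * ∑ j, matrixUnit e j j := by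
        rw [Finset.sum_mul, Finset.sum_mul]; simp only [Finset.mul_sum]
    _ = a := by rw [sum_matrixUnit_self, one_mul, mul_one]

lemma mulCentralizerInv_mulCentralizer (z : S ⊗[R] centralizer R (S : Set A)) :
    mulCentralizerInv e (mulCentralizer S z) = z := by
  induction z using TensorProduct.induction_on with
  | zero => simp
  | add x y hx hy => rw [map_add, map_add, hx, hy]
  | tmul s c =>
    rw [mulCentralizer_tmul, mulCentralizerInv_apply]
    simp only [centralizerEntry_mul, ← TensorProduct.smul_tmul, ← TensorProduct.sum_tmul,
      ← eq_sum_smul_single]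

end MatrixUnits

theorem mulCentralizer_bijective (e : Matrix n n R ≃ₐ[R] S) :
    Function.Bijective (mulCentralizer S) :=
  Function.bijective_iff_has_inverse.mpr
    ⟨mulCentralizerInv e, mulCentralizerInv_mulCentralizer e, mulCentralizer_mulCentralizerInv e⟩

noncomputable def algEquivMatrixCentralizer (e : Matrix n n R ≃ₐ[R] S) :
    A ≃ₐ[R] Matrix n n (centralizer R (S : Set A)) :=
  (AlgEquiv.ofBijective _ (mulCentralizer_bijective e)).symm
    |>.trans (Algebra.TensorProduct.congr e.symm .refl)
    |>.trans (Algebra.TensorProduct.comm R _ _)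
    |>.trans (matrixEquivTensor n R _).symm

end Subalgebra

theorem matrix_subalgebra_tensor_centralizer_general
    (F A : Type*) [Field F] [Ring A] [Algebra F A]
    (q : ℕ) (B : Subalgebra F A)
    (hB : Nonempty (B ≃ₐ[F] Matrix (Fin q) (Fin q) F)) :
    Function.Bijective
      (Algebra.TensorProduct.lift B.val (Subalgebra.centralizer F (B : Set A)).val
        (fun b c => c.2 b.1 b.2)) ∧
    Nonempty (A ≃ₐ[F] Matrix (Fin q) (Fin q) (Subalgebra.centralizer F (B : Set A))) := by
  obtain ⟨f⟩ := hB
  exact ⟨Subalgebra.mulCentralizer_bijective f.symm, ⟨Subalgebra.algEquivMatrixCentralizer f.symm⟩⟩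

/-- If `B` is a subalgebra of a central simple `F`-algebra `A` with
`B ≅ M_q(F)`, and `C` is the centralizer of `B` in `A`, then the natural map
`B ⊗[F] C → A` induced by multiplication is an isomorphism, and consequently
`A ≅ M_q(C)`. -/
theorem matrix_subalgebra_tensor_centralizer
    (F A : Type*) [Field F] [Ring A] [Algebra F A] [FiniteDimensional F A]
    [Nontrivial A] [Algebra.IsCentral F A] [IsSimpleRing A]
    (q : ℕ) (hq : 0 < q) (B : Subalgebra F A)
    (hB : Nonempty (B ≃ₐ[F] Matrix (Fin q) (Fin q) F)) :
    Function.Bijective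
      (Algebra.TensorProduct.lift B.val (Subalgebra.centralizer F (B : Set A)).val
        (fun b c => c.2 b.1 b.2)) ∧
    Nonempty (A ≃ₐ[F] Matrix (Fin q) (Fin q) (Subalgebra.centralizer F (B : Set A))) :=
  matrix_subalgebra_tensor_centralizer_general F A q B hB
end

section
/- Let F be a field, A and B finite-dimensional associative unital F-algebras, C a subalgebra of A, and D a subalgebra of B. Then the centralizer of the image of C ⊗_F D in A ⊗_F B equals the image of Z_A(C) ⊗_F Z_B(D) in A ⊗_F B, where Z_A(C) denotes the centralizer of C in A and Z_B(D) the centralizer of D in B; moreover the natural map Z_A(C) ⊗_F Z_B(D) → A ⊗_F B is injective. -/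
/-!
The centralizer of `C ⊗ D` is the intersection of the centralizers of `C ⊗ 1` and `1 ⊗ D`, which
over a field are `Z_A(C) ⊗ B` and `A ⊗ Z_B(D)`. Their intersection is `Z_A(C) ⊗ Z_B(D)`: an element
of `Z_A(C) ⊗ B` lying in `A ⊗ Z_B(D)` dies in `A ⊗ (B / Z_B(D))`, hence, since
`Z_A(C) ⊗ (B / Z_B(D)) → A ⊗ (B / Z_B(D))` is injective, already in `Z_A(C) ⊗ (B / Z_B(D))`,
and right exactness of `Z_A(C) ⊗ -` puts it in the image of `Z_A(C) ⊗ Z_B(D)`.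
-/

open scoped TensorProduct

namespace LinearMap

variable {R M N P Q : Type*} [CommRing R] [AddCommGroup M] [Module R M] [AddCommGroup N]
  [Module R N] [AddCommGroup P] [Module R P] [AddCommGroup Q] [Module R Q]

theorem range_rTensor_inf_range_lTensor (f : P →ₗ[R] M) (g : Q →ₗ[R] N)
    (hf : Function.Injective f) [Module.Flat R (N ⧸ range g)] :
    range (f.rTensor N) ⊓ range (g.lTensor M) = range (TensorProduct.map f g) := by
  refine le_antisymm ?_ (le_inf ?_ ?_)
  · rintro x ⟨⟨u, rfl⟩, hx⟩
    have hu : (range g).mkQ.lTensor P u = 0 := by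
      apply Module.Flat.rTensor_preserves_injective_linearMap f hf
      rw [map_zero, ← comp_apply, rTensor_comp_lTensor, ← lTensor_comp_rTensor, comp_apply]
      exact (lTensor_exact M (exact_map_mkQ_range g) (Submodule.mkQ_surjective _) _).mpr hx
    obtain ⟨w, rfl⟩ :=
      (lTensor_exact P (exact_map_mkQ_range g) (Submodule.mkQ_surjective _) u).mp hu
    exact ⟨w, by rw [← rTensor_comp_lTensor]; rfl⟩
  · rw [← rTensor_comp_lTensor]
    exact range_comp_le_range _ _
  · rw [← lTensor_comp_rTensor]
    exact range_comp_le_range _ _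

end LinearMap

namespace Algebra.TensorProduct

variable {F A A' B B' : Type*} [Field F] [Ring A] [Algebra F A] [Ring A'] [Algebra F A']
  [Ring B] [Algebra F B] [Ring B'] [Algebra F B']

theorem range_map_id_inf_range_map_id (f : A' →ₐ[F] A) (g : B' →ₐ[F] B)
    (hf : Function.Injective f) :
    (map f (AlgHom.id F B)).range ⊓ (map (AlgHom.id F A) g).range = (map f g).range :=
  SetLike.ext fun x =>
    SetLike.ext_iff.mp (LinearMap.range_rTensor_inf_range_lTensor f.toLinearMap g.toLinearMap hf) x

end Algebra.TensorProduct

theorem centralizer_tensor_centralizer_general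
    (F A B : Type*) [Field F]
    [Ring A] [Algebra F A]
    [Ring B] [Algebra F B]
    (C : Subalgebra F A) (D : Subalgebra F B) :
    Subalgebra.centralizer F
        (((Algebra.TensorProduct.map C.val D.val).range : Subalgebra F (A ⊗[F] B)) :
          Set (A ⊗[F] B)) =
      (Algebra.TensorProduct.map (Subalgebra.centralizer F (C : Set A)).val
          (Subalgebra.centralizer F (D : Set B)).val).range ∧
    Function.Injective
      (Algebra.TensorProduct.map (Subalgebra.centralizer F (C : Set A)).val
        (Subalgebra.centralizer F (D : Set B)).val) := by
  refine ⟨?_, TensorProduct.map_injective_of_flat_flat _ _ Subtype.val_injective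
    Subtype.val_injective⟩
  rw [Algebra.TensorProduct.map_range, Subalgebra.centralizer_coe_sup, AlgHom.range_comp,
    AlgHom.range_comp, Subalgebra.range_val, Subalgebra.range_val,
    Subalgebra.centralizer_coe_map_includeLeft_eq_center_tensorProduct,
    Subalgebra.centralizer_coe_map_includeRight_eq_center_tensorProduct,
    Algebra.TensorProduct.range_map_id_inf_range_map_id _ _ Subtype.val_injective]

/-- The centralizer of the image of `C ⊗[F] D` in `A ⊗[F] B` is the image of
`Z_A(C) ⊗[F] Z_B(D)`, and the natural map `Z_A(C) ⊗[F] Z_B(D) → A ⊗[F] B` is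
injective. -/
theorem centralizer_tensor_centralizer
    (F A B : Type*) [Field F]
    [Ring A] [Algebra F A] [FiniteDimensional F A]
    [Ring B] [Algebra F B] [FiniteDimensional F B]
    (C : Subalgebra F A) (D : Subalgebra F B) :
    Subalgebra.centralizer F
        (((Algebra.TensorProduct.map C.val D.val).range : Subalgebra F (A ⊗[F] B)) :
          Set (A ⊗[F] B)) =
      (Algebra.TensorProduct.map (Subalgebra.centralizer F (C : Set A)).val
          (Subalgebra.centralizer F (D : Set B)).val).range ∧
    Function.Injective
      (Algebra.TensorProduct.map (Subalgebra.centralizer F (C : Set A)).val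
        (Subalgebra.centralizer F (D : Set B)).val) :=
  centralizer_tensor_centralizer_general F A B C D
end

section
/- Let F be a field, V an F-vector space of finite dimension r, A = End_F(V), and L a subalgebra of A (containing F·id) that is a field, with ℓ = dim_F(L). Then V is a free L-module, so ℓ divides r, say r = ℓ·q; the centralizer B of L in A is isomorphic as an F-algebra to the matrix algebra M_q(L); and the centralizer of B in A equals L. -/
/-!
An `F`-endomorphism commutes with `L` exactly when it is `L`-linear, so the centralizer `B` of `L`
is `End_L(V)`, which is `M_q(L)` once an `L`-basis of `V` is chosen (`V` is free because `L` is a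
field). Since `L` is commutative, an endomorphism commuting with `B` commutes with `L`, so it is
`L`-linear and central in `End_L(V)`, i.e. multiplication by an element of `L`.
-/

namespace Subalgebra

variable {R M : Type*} [CommSemiring R] [AddCommMonoid M] [Module R M]
  (S : Subalgebra R (Module.End R M))

theorem mem_centralizer_iff_map_smul {g : Module.End R M} :
    g ∈ centralizer R (S : Set (Module.End R M)) ↔ ∀ (s : S) (m : M), g (s • m) = s • g m := by
  refine ⟨fun hg s m => ?_, fun hg s hs => LinearMap.ext fun m => (hg ⟨s, hs⟩ m).symm⟩
  exact (LinearMap.congr_fun ((mem_centralizer_iff R).mp hg s s.2) m).symm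

theorem restrictScalars_mem_centralizer (f : Module.End S M) :
    f.restrictScalars R ∈ centralizer R (S : Set (Module.End R M)) :=
  (S.mem_centralizer_iff_map_smul).mpr f.map_smul

def centralizerAlgEquivEnd : centralizer R (S : Set (Module.End R M)) ≃ₐ[R] Module.End S M where
  toFun g := { toFun := g.1, map_add' := g.1.map_add,
               map_smul' := (S.mem_centralizer_iff_map_smul).mp g.2 }
  invFun f := ⟨f.restrictScalars R, S.restrictScalars_mem_centralizer f⟩
  left_inv _ := rfl
  right_inv _ := rfl
  map_mul' _ _ := rfl
  map_add' _ _ := rfl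
  commutes' _ := rfl

theorem centralizer_centralizer_eq_of_free (hS : S ≤ centralizer R (S : Set (Module.End R M)))
    [Module.Free S M] :
    centralizer R (centralizer R (S : Set (Module.End R M)) : Set (Module.End R M)) = S := by
  refine le_antisymm (fun g hg => ?_) (le_centralizer_centralizer R)
  have hgS : g ∈ centralizer R (S : Set (Module.End R M)) := centralizer_le R _ _ hS hg
  let e := S.centralizerAlgEquivEnd
  have hcenter : e ⟨g, hgS⟩ ∈ Set.center (Module.End S M) := by
    refine Semigroup.mem_center_iff.mpr fun f => ?_
    rw [← e.apply_symm_apply f, ← map_mul, ← map_mul]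
    exact congrArg e (Subtype.ext ((mem_centralizer_iff R).mp hg _ (e.symm f).2))
  obtain ⟨α, _, hgα⟩ := Module.End.mem_center_iff.mp hcenter
  have : g = α := LinearMap.ext fun m => LinearMap.congr_fun hgα m
  exact this ▸ α.2

end Subalgebra

/-- Let `V` be a finite-dimensional `F`-vector space, `A = End_F(V)`, and `L` a
subalgebra of `A` which is a field, of `F`-dimension `ℓ`.  Then `V` is a free
`L`-module, `ℓ` divides `r = dim_F V`, say `r = ℓ·q`; the centralizer `B` of
`L` in `A` is isomorphic to `M_q(L)` as an `F`-algebra; and the centralizer of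
`B` in `A` equals `L`. -/
theorem field_subalgebra_of_endomorphisms
    (F V : Type*) [Field F] [AddCommGroup V] [Module F V] [FiniteDimensional F V]
    (L : Subalgebra F (Module.End F V)) (hL : IsField L) :
    ∃ q : ℕ,
      Module.finrank F V = Module.finrank F L * q ∧
      (letI : Module L V := Module.compHom V L.val.toRingHom
       Nonempty (Module.Basis (Fin q) L V)) ∧
      Nonempty ((Subalgebra.centralizer F (L : Set (Module.End F V))) ≃ₐ[F]
        Matrix (Fin q) (Fin q) L) ∧
      Subalgebra.centralizer F
          ((Subalgebra.centralizer F (L : Set (Module.End F V))) : Set (Module.End F V))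
        = L := by
  let : Field L := hL.toField
  -- `Subalgebra.moduleLeft`, used below, is definitionally the `Module.compHom` structure above.
  have : Module.Finite L V := .of_restrictScalars_finite F L V
  let b := Module.finBasis L V
  have hcomm : L ≤ Subalgebra.centralizer F (L : Set (Module.End F V)) := fun x hx y hy =>
    congrArg Subtype.val (mul_comm (⟨y, hy⟩ : L) ⟨x, hx⟩)
  exact ⟨Module.finrank L V, (Module.finrank_mul_finrank F L V).symm, ⟨b⟩,
    ⟨L.centralizerAlgEquivEnd.trans ((algEquivMatrix b).restrictScalars F)⟩,
    L.centralizer_centralizer_eq_of_free hcomm⟩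
end

section
/- Let F be a field, A a central simple F-algebra, and L a finite field extension of F that splits A, i.e., L ⊗_F A is isomorphic as an L-algebra to a matrix algebra M_q(L). Then there exists a central simple F-algebra B such that: B is Brauer equivalent to A (there exist positive integers m, n with M_m(B) ≅ M_n(A) as F-algebras); dim_F(B) = (dim_F(L))²; and there is an injective F-algebra homomorphism ι : L → B whose image is a maximal commutative subalgebra of B, i.e., the centralizer of ι(L) in B equals ι(L). -/
open scoped TensorProduct

universe u v w

/-!
Put `ψ a = e (1 ⊗ a)` and let `V = L^q` be the row space, a right `A`-module through `ψ`; take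
`B = End_A(V)`, which contains `L` acting by scalars. An endomorphism commuting with `L` is
`L`-linear and commutes with the right action of the `L`-span of `ψ(A)`, which is all of `M_q(L)`;
so it is a scalar, and `L` is its own centralizer. As right `A`-modules
`V^q ≅ M_q(L) ≅ L ⊗ A ≅ A^d` with `d = [L : F]`, so `M_q(B) ≅ End_A(A^d) ≅ M_d(A)`:
`B` is Brauer equivalent to `A`, hence central simple, and comparing dimensions gives `dim B = d²`.
-/

theorem IsSimpleRing.of_matrix_ringEquiv {B D m ι : Type*} [Ring B] [Ring D] [Fintype m]
    [DecidableEq m] [Nonempty m] [Fintype ι] [DecidableEq ι] [Nonempty ι] [IsSimpleRing D]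
    (Θ : Matrix m m B ≃+* Matrix ι ι D) : IsSimpleRing B :=
  have : IsSimpleRing (Matrix m m B) := .of_ringEquiv Θ.symm inferInstance
  ⟨(TwoSidedIdeal.orderIsoMatrix (n := m)).isSimpleOrder⟩

theorem Algebra.IsCentral.of_matrix_algEquiv {K B D m ι : Type*} [CommSemiring K] [Semiring B]
    [Algebra K B] [Semiring D] [Algebra K D] [Fintype m] [DecidableEq m] [Nonempty m]
    [Fintype ι] [DecidableEq ι] [Algebra.IsCentral K D]
    (Θ : Matrix m m B ≃ₐ[K] Matrix ι ι D) :
    Algebra.IsCentral K B where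
  out x hx := by
    obtain ⟨i⟩ := ‹Nonempty m›
    have hx' : Matrix.scalarAlgHom m K x ∈ Subalgebra.center K (Matrix m m B) :=
      Matrix.subalgebraCenter_eq_scalarAlgHom_map (n := m) (R := K) (A := B) ▸
        Subalgebra.mem_map.2 ⟨x, hx, rfl⟩
    obtain ⟨c, hc⟩ := (Algebra.IsCentral.mem_center_iff K).1
      ((MulEquivClass.apply_mem_center_iff Θ).2 hx')
    have : Matrix.scalarAlgHom m K x = algebraMap K _ c := by simpa using congr(Θ.symm $hc)
    exact ⟨c, by simpa [Matrix.algebraMap_matrix_apply] using congr($this.symm i i)⟩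

theorem Subalgebra.centralizer_image_algEquiv {R B C : Type*} [CommSemiring R] [Semiring B]
    [Semiring C] [Algebra R B] [Algebra R C] (g : B ≃ₐ[R] C) (s : Set B) :
    Subalgebra.centralizer R (g '' s) = (Subalgebra.centralizer R s).map (g : B →ₐ[R] C) := by
  ext x
  simp only [Subalgebra.mem_centralizer_iff, Set.forall_mem_image, Subalgebra.mem_map]
  constructor
  · intro hx
    refine ⟨g.symm x, fun y hy => g.injective ?_, g.apply_symm_apply x⟩
    simpa using hx hy
  · rintro ⟨x, hx, rfl⟩ y hy
    simp [← map_mul, hx y hy]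

noncomputable def LinearEquiv.matrixEndAlgEquiv (F : Type*) {A M m ι : Type*} [CommSemiring F]
    [Semiring A] [Algebra F A] [AddCommMonoid M] [Module F M] [Module Aᵐᵒᵖ M]
    [IsScalarTower F Aᵐᵒᵖ M] [Fintype m] [DecidableEq m] [Fintype ι] [DecidableEq ι]
    (u : (m → M) ≃ₗ[Aᵐᵒᵖ] (ι → A)) :
    Matrix m m (Module.End Aᵐᵒᵖ M) ≃ₐ[F] Matrix ι ι A :=
  (endVecAlgEquivMatrixEnd m F Aᵐᵒᵖ M).symm.trans <| (u.conjAlgEquiv F).trans <|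
    (endVecAlgEquivMatrixEnd ι F Aᵐᵒᵖ A).trans (AlgEquiv.moduleEndSelfOp F).symm.mapMatrix

section TensorRight

variable {F A N : Type*} [CommSemiring F] [Semiring A] [Algebra F A]

theorem Algebra.TensorProduct.op_smul_eq_mul_tmul_one [Semiring N] [Algebra F N] (a : A)
    (t : A ⊗[F] N) : MulOpposite.op a • t = t * (a ⊗ₜ 1) := by
  induction t using TensorProduct.induction_on with
  | zero => simp
  | tmul x y => simp [TensorProduct.smul_tmul', MulOpposite.smul_eq_mul_unop]
  | add x y hx hy => rw [smul_add, hx, hy, add_mul]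

noncomputable def Module.Basis.tensorEquivPi [AddCommMonoid N] [Module F N] {ι : Type*}
    [Fintype ι] [DecidableEq ι] (b : Module.Basis ι F N) :
    A ⊗[F] N ≃ₗ[Aᵐᵒᵖ] (ι → A) :=
  TensorProduct.AlgebraTensorModule.congr (.refl Aᵐᵒᵖ A) b.repr ≪≫ₗ
    TensorProduct.finsuppScalarRight F Aᵐᵒᵖ A ι ≪≫ₗ
    Finsupp.linearEquivFunOnFinite Aᵐᵒᵖ A ι

end TensorRight

namespace Matrix

variable {L n : Type*} [CommRing L] [Fintype n] [DecidableEq n]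

theorem mem_center_of_map_vecMul {S : Set (Matrix n n L)}
    (hS : Submodule.span L S = ⊤) {g : Module.End L (n → L)}
    (hg : ∀ M ∈ S, ∀ v, g (v ᵥ* M) = g v ᵥ* M) :
    g ∈ Subalgebra.center L (Module.End L (n → L)) := by
  have key : ∀ M, ∀ v, g (v ᵥ* M) = g v ᵥ* M := fun M => by
    have hM : M ∈ Submodule.span L S := hS ▸ Submodule.mem_top
    induction hM using Submodule.span_induction with
    | mem M hM => exact hg M hM
    | zero => simp
    | add M N _ _ hM hN => intro v; rw [vecMul_add, map_add, hM, hN, vecMul_add]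
    | smul c M _ hM => intro v; rw [vecMul_smul, map_smul, hM, vecMul_smul]
  refine Subalgebra.mem_center_iff.2 fun h => ?_
  obtain ⟨M, rfl⟩ := toLinearMapRight'.surjective h
  exact LinearMap.ext fun v => (key M v).symm

end Matrix

section RowModule

open Matrix

variable {F A L n : Type*} [CommSemiring F] [Semiring A] [Algebra F A] [CommRing L] [Algebra F L]
  [Fintype n] [DecidableEq n]

@[nolint unusedArguments]
def RowModule (_ψ : A →ₐ[F] Matrix n n L) : Type _ := n → L

namespace RowModule

variable (ψ : A →ₐ[F] Matrix n n L)

instance : AddCommGroup (RowModule ψ) := inferInstanceAs (AddCommGroup (n → L))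
instance : Module L (RowModule ψ) := inferInstanceAs (Module L (n → L))
instance : Module F (RowModule ψ) := inferInstanceAs (Module F (n → L))
instance : IsScalarTower F L (RowModule ψ) := inferInstanceAs (IsScalarTower F L (n → L))

instance : Module Aᵐᵒᵖ (RowModule ψ) where
  smul a v := (v : n → L) ᵥ* ψ a.unop
  one_smul := fun (v : n → L) => show v ᵥ* ψ 1 = v by simp
  mul_smul a b := fun (v : n → L) =>
    show v ᵥ* ψ (b.unop * a.unop) = v ᵥ* ψ b.unop ᵥ* ψ a.unop by simp [vecMul_vecMul]
  smul_zero a := zero_vecMul _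
  smul_add a v w := add_vecMul _ _ _
  add_smul a b := fun (v : n → L) =>
    show v ᵥ* ψ (a.unop + b.unop) = v ᵥ* ψ a.unop + v ᵥ* ψ b.unop by simp [vecMul_add]
  zero_smul := fun (v : n → L) => show v ᵥ* ψ 0 = 0 by simp

instance : SMulCommClass L Aᵐᵒᵖ (RowModule ψ) where
  smul_comm c a v := (smul_vecMul c (v : n → L) (ψ a.unop)).symm

instance : IsScalarTower F Aᵐᵒᵖ (RowModule ψ) where
  smul_assoc c a := fun (v : n → L) =>
    show v ᵥ* ψ (c • a.unop) = c • (v ᵥ* ψ a.unop) by rw [map_smul, vecMul_smul]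

noncomputable abbrev lsmul : L →ₐ[F] Module.End Aᵐᵒᵖ (RowModule ψ) :=
  Algebra.lsmul F Aᵐᵒᵖ (RowModule ψ)

variable {ψ}

theorem centralizer_range_lsmul (hψ : Submodule.span L (Set.range ψ) = ⊤) :
    Subalgebra.centralizer F ((lsmul ψ).range : Set (Module.End Aᵐᵒᵖ (RowModule ψ))) =
      (lsmul ψ).range := by
  refine le_antisymm (fun f hf => ?_) ?_
  · have hf : ∀ (c : L) (v : RowModule ψ), f (c • v) = c • f v := fun c v =>
      congr($((Subalgebra.mem_centralizer_iff F).1 hf _ ⟨c, rfl⟩) v).symm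
    let fL : Module.End L (n → L) := { toFun := f, map_add' := f.map_add, map_smul' := hf }
    have hfL : fL ∈ Subalgebra.center L (Module.End L (n → L)) := by
      refine Matrix.mem_center_of_map_vecMul hψ ?_
      rintro _ ⟨a, rfl⟩ v
      exact f.map_smul (MulOpposite.op a) v
    obtain ⟨c, hc⟩ := (Algebra.IsCentral.mem_center_iff L).1 hfL
    exact ⟨c, LinearMap.ext fun v => congr($hc v).symm⟩
  · rintro _ ⟨c, rfl⟩
    rw [Subalgebra.mem_centralizer_iff]
    rintro _ ⟨c', rfl⟩
    rw [← map_mul, ← map_mul, mul_comm]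

end RowModule

noncomputable abbrev AlgEquiv.compIncludeRight (e : L ⊗[F] A ≃ₐ[L] Matrix n n L) :
    A →ₐ[F] Matrix n n L :=
  (e.restrictScalars F).toAlgHom.comp Algebra.TensorProduct.includeRight

theorem AlgEquiv.span_range_compIncludeRight (e : L ⊗[F] A ≃ₐ[L] Matrix n n L) :
    Submodule.span L (Set.range e.compIncludeRight) = ⊤ := by
  refine Submodule.eq_top_iff'.2 fun M => ?_
  obtain ⟨t, rfl⟩ := e.surjective M
  induction t using TensorProduct.induction_on with
  | zero => simp
  | tmul c a =>
    have : c ⊗ₜ[F] a = c • (1 ⊗ₜ a) := by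
      rw [TensorProduct.smul_tmul', smul_eq_mul, mul_one]
    rw [this, map_smul]
    exact Submodule.smul_mem _ c (Submodule.subset_span ⟨a, rfl⟩)
  | add s t hs ht => rw [map_add]; exact add_mem hs ht

noncomputable def RowModule.piEquivTensor (e : L ⊗[F] A ≃ₐ[L] Matrix n n L) :
    (n → RowModule e.compIncludeRight) ≃ₗ[Aᵐᵒᵖ] A ⊗[F] L :=
  AddEquiv.toLinearEquiv
    ((e.symm.toAddEquiv : Matrix n n L ≃+ L ⊗[F] A).trans
      (Algebra.TensorProduct.comm F L A).toAddEquiv) fun a (M : Matrix n n L) => by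
    change Algebra.TensorProduct.comm F L A (e.symm (M * e (1 ⊗ₜ a.unop))) =
      a • Algebra.TensorProduct.comm F L A (e.symm M)
    rw [map_mul, e.symm_apply_apply, map_mul, Algebra.TensorProduct.comm_tmul,
      ← Algebra.TensorProduct.op_smul_eq_mul_tmul_one, MulOpposite.op_unop]

end RowModule

theorem Module.finrank_eq_card_sq_of_splits {F A L B n ι : Type*} [Field F] [Ring A]
    [Algebra F A] [Field L] [Algebra F L] [Ring B] [Algebra F B] [Fintype n] [DecidableEq n]
    [Nonempty n] [Fintype ι] [DecidableEq ι] (e : L ⊗[F] A ≃ₐ[L] Matrix n n L)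
    (Θ : Matrix n n B ≃ₐ[F] Matrix ι ι A) :
    finrank F B = Fintype.card ι ^ 2 := by
  have hA : finrank F A = Fintype.card n * Fintype.card n := by
    rw [← finrank_baseChange (R := L), e.toLinearEquiv.finrank_eq, finrank_matrix, finrank_self,
      mul_one]
  have hΘ := Θ.toLinearEquiv.finrank_eq
  rw [finrank_matrix, finrank_matrix, hA] at hΘ
  refine Nat.eq_of_mul_eq_mul_left (by positivity : 0 < Fintype.card n * Fintype.card n) ?_
  rw [hΘ]
  ring

theorem exists_brauer_equivalent_with_maximal_subfield_general
    (F : Type u) (A : Type v) (L : Type w) [Field F]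
    [Ring A] [Algebra F A]
    [Algebra.IsCentral F A] [IsSimpleRing A]
    [Field L] [Algebra F L] [FiniteDimensional F L]
    (q : ℕ) (hq : 0 < q)
    (hsplit : Nonempty ((L ⊗[F] A) ≃ₐ[L] Matrix (Fin q) (Fin q) L)) :
    ∃ (B : Type (max v w)) (_ : Ring B) (_ : Algebra F B),
      Nontrivial B ∧ FiniteDimensional F B ∧
      Algebra.IsCentral F B ∧ IsSimpleRing B ∧
      (∃ m n : ℕ, 0 < m ∧ 0 < n ∧
        Nonempty (Matrix (Fin m) (Fin m) B ≃ₐ[F] Matrix (Fin n) (Fin n) A)) ∧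
      Module.finrank F B = (Module.finrank F L) ^ 2 ∧
      ∃ ι : L →ₐ[F] B, Function.Injective ι ∧
        Subalgebra.centralizer F (ι.range : Set B) = ι.range := by
  obtain ⟨e⟩ := hsplit
  have : Nonempty (Fin q) := ⟨⟨0, hq⟩⟩
  have : Nonempty (Fin (Module.finrank F L)) := ⟨⟨0, Module.finrank_pos⟩⟩
  let E := Module.End Aᵐᵒᵖ (RowModule e.compIncludeRight)
  let g : ULift.{v} E ≃ₐ[F] E := ULift.algEquiv
  let Θ : Matrix (Fin q) (Fin q) (ULift.{v} E) ≃ₐ[F]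
      Matrix (Fin (Module.finrank F L)) (Fin (Module.finrank F L)) A :=
    g.mapMatrix.trans <|
      ((RowModule.piEquivTensor e).trans (Module.finBasis F L).tensorEquivPi).matrixEndAlgEquiv F
  have hdim : Module.finrank F (ULift.{v} E) = Module.finrank F L ^ 2 := by
    simpa using Module.finrank_eq_card_sq_of_splits e Θ
  have hdim_pos : 0 < Module.finrank F (ULift.{v} E) := hdim ▸ pow_pos Module.finrank_pos 2
  have : Nontrivial (ULift.{v} E) := Module.nontrivial_of_finrank_pos hdim_pos
  refine ⟨ULift.{v} E, inferInstance, inferInstance, inferInstance,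
    Module.finite_of_finrank_pos hdim_pos, .of_matrix_algEquiv Θ,
    .of_matrix_ringEquiv Θ.toRingEquiv,
    ⟨q, _, hq, Module.finrank_pos, ⟨Θ⟩⟩, hdim, g.symm.toAlgHom.comp (RowModule.lsmul _),
    RingHom.injective _, ?_⟩
  rw [AlgHom.range_comp, Subalgebra.coe_map, AlgEquiv.coe_toAlgHom,
    Subalgebra.centralizer_image_algEquiv,
    RowModule.centralizer_range_lsmul e.span_range_compIncludeRight]

/-- If a finite field extension `L` of `F` splits the central simple `F`-algebra
`A`, then there is a central simple `F`-algebra `B`, Brauer equivalent to `A`,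
with `dim_F B = (dim_F L)²`, containing (an isomorphic copy of) `L` as a maximal
commutative subalgebra. -/
theorem exists_brauer_equivalent_with_maximal_subfield
    (F : Type u) (A : Type v) (L : Type w) [Field F]
    [Ring A] [Algebra F A] [FiniteDimensional F A] [Nontrivial A]
    [Algebra.IsCentral F A] [IsSimpleRing A]
    [Field L] [Algebra F L] [FiniteDimensional F L]
    (q : ℕ) (hq : 0 < q)
    (hsplit : Nonempty ((L ⊗[F] A) ≃ₐ[L] Matrix (Fin q) (Fin q) L)) :
    ∃ (B : Type (max v w)) (_ : Ring B) (_ : Algebra F B),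
      Nontrivial B ∧ FiniteDimensional F B ∧
      Algebra.IsCentral F B ∧ IsSimpleRing B ∧
      (∃ m n : ℕ, 0 < m ∧ 0 < n ∧
        Nonempty (Matrix (Fin m) (Fin m) B ≃ₐ[F] Matrix (Fin n) (Fin n) A)) ∧
      Module.finrank F B = (Module.finrank F L) ^ 2 ∧
      ∃ ι : L →ₐ[F] B, Function.Injective ι ∧
        Subalgebra.centralizer F (ι.range : Set B) = ι.range :=
  exists_brauer_equivalent_with_maximal_subfield_general F A L q hq hsplit
end

section
/- Let F be a field and A a central simple F-algebra. Then the F-dimension of A is a perfect square: there exists a positive integer q with dim_F(A) = q². -/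
/-!
Tensoring a central simple algebra with a simple algebra gives a simple algebra, so for an
algebraic closure `K` of `F` the `K`-algebra `K ⊗[F] A` is simple. By Wedderburn it is a matrix
algebra `Mₙ(K)`, and base change preserves dimension, so `dim_F A = n²`.
-/

open Module TensorProduct

namespace Algebra.TensorProduct

section Coefficients

variable {F B A ι : Type*} [CommRing F] [Ring B] [Algebra F B] [Ring A] [Algebra F A]
  [DecidableEq ι] (ℬ : Basis ι F B)

theorem equivFinsuppOfBasisLeft_one_tmul_mul_mul_one_tmul (u v : A) (x : B ⊗[F] A) (i : ι) :
    equivFinsuppOfBasisLeft ℬ ((1 ⊗ₜ u) * x * (1 ⊗ₜ v)) i =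
      u * equivFinsuppOfBasisLeft ℬ x i * v := by
  induction x using TensorProduct.induction_on with
  | zero => simp
  | tmul b a =>
    simp only [tmul_mul_tmul, one_mul, mul_one,
      equivFinsuppOfBasisLeft_apply_tmul_apply, mul_smul_comm, smul_mul_assoc]
  | add x y hx hy => simp only [mul_add, add_mul, map_add, Finsupp.add_apply, hx, hy]

theorem support_equivFinsuppOfBasisLeft_one_tmul_mul_mul_one_tmul_subset (u v : A)
    (x : B ⊗[F] A) :
    (equivFinsuppOfBasisLeft ℬ ((1 ⊗ₜ u) * x * (1 ⊗ₜ v))).support ⊆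
      (equivFinsuppOfBasisLeft ℬ x).support := by
  intro i
  simp only [Finsupp.mem_support_iff, equivFinsuppOfBasisLeft_one_tmul_mul_mul_one_tmul]
  exact mt fun h ↦ by rw [h, mul_zero, zero_mul]

def coeffIdeal (I : TwoSidedIdeal (B ⊗[F] A)) (s : Finset ι) (j : ι) : TwoSidedIdeal A :=
  .mk' {a | ∃ x ∈ I, (equivFinsuppOfBasisLeft ℬ x).support ⊆ s ∧ equivFinsuppOfBasisLeft ℬ x j = a}
    ⟨0, I.zero_mem, by simp, by simp⟩
    (by
      rintro _ _ ⟨x, hxI, hxs, rfl⟩ ⟨y, hyI, hys, rfl⟩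
      refine ⟨x + y, I.add_mem hxI hyI, ?_, by simp⟩
      simpa using Finsupp.support_add.trans (Finset.union_subset hxs hys))
    (by
      rintro _ ⟨x, hxI, hxs, rfl⟩
      exact ⟨-x, I.neg_mem hxI, by simpa using hxs, by simp⟩)
    (by
      rintro u _ ⟨x, hxI, hxs, rfl⟩
      refine ⟨(1 ⊗ₜ u) * x * (1 ⊗ₜ 1), I.mul_mem_right _ _ (I.mul_mem_left _ _ hxI),
        (support_equivFinsuppOfBasisLeft_one_tmul_mul_mul_one_tmul_subset ℬ _ _ _).trans hxs, ?_⟩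
      rw [equivFinsuppOfBasisLeft_one_tmul_mul_mul_one_tmul, mul_one])
    (by
      rintro _ v ⟨x, hxI, hxs, rfl⟩
      refine ⟨(1 ⊗ₜ 1) * x * (1 ⊗ₜ v), I.mul_mem_right _ _ (I.mul_mem_left _ _ hxI),
        (support_equivFinsuppOfBasisLeft_one_tmul_mul_mul_one_tmul_subset ℬ _ _ _).trans hxs, ?_⟩
      rw [equivFinsuppOfBasisLeft_one_tmul_mul_mul_one_tmul, one_mul])

theorem mem_coeffIdeal {I : TwoSidedIdeal (B ⊗[F] A)} {s : Finset ι} {j : ι} {a : A} :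
    a ∈ coeffIdeal ℬ I s j ↔
      ∃ x ∈ I, (equivFinsuppOfBasisLeft ℬ x).support ⊆ s ∧ equivFinsuppOfBasisLeft ℬ x j = a :=
  TwoSidedIdeal.mem_mk' ..

theorem exists_mem_coeff_eq_one [IsSimpleRing A] {I : TwoSidedIdeal (B ⊗[F] A)} {x : B ⊗[F] A}
    (hxI : x ∈ I) {j : ι} (hj : equivFinsuppOfBasisLeft ℬ x j ≠ 0) :
    ∃ y ∈ I, (equivFinsuppOfBasisLeft ℬ y).support ⊆ (equivFinsuppOfBasisLeft ℬ x).support ∧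
      equivFinsuppOfBasisLeft ℬ y j = 1 :=
  (mem_coeffIdeal ℬ).1 <| IsSimpleRing.one_mem_of_ne_zero_mem _ hj <|
    (mem_coeffIdeal ℬ).2 ⟨x, hxI, subset_rfl, rfl⟩

/-- If `y` has coefficient `1` at `j₀`, the commutator of `y` with `1 ⊗ w` vanishes at `j₀`,
so it has smaller support and minimality kills it. -/
theorem coeff_mem_center_of_minimal {I : TwoSidedIdeal (B ⊗[F] A)} {y : B ⊗[F] A} (hyI : y ∈ I)
    {j₀ : ι} (hj₀ : equivFinsuppOfBasisLeft ℬ y j₀ = 1)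
    (hmin : ∀ z ∈ I, (equivFinsuppOfBasisLeft ℬ z).support ⊂ (equivFinsuppOfBasisLeft ℬ y).support →
      z = 0)
    (j : ι) : equivFinsuppOfBasisLeft ℬ y j ∈ Subalgebra.center F A := by
  nontriviality A
  refine Subalgebra.mem_center_iff.2 fun w ↦ ?_
  set z := (1 ⊗ₜ w) * y * (1 ⊗ₜ 1) - (1 ⊗ₜ 1) * y * (1 ⊗ₜ w)
  have hzI : z ∈ I := I.sub_mem (I.mul_mem_right _ _ (I.mul_mem_left _ _ hyI))
    (I.mul_mem_right _ _ (I.mul_mem_left _ _ hyI))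
  have hz : ∀ i, equivFinsuppOfBasisLeft ℬ z i =
      w * equivFinsuppOfBasisLeft ℬ y i - equivFinsuppOfBasisLeft ℬ y i * w := by
    intro i
    simp only [z, map_sub, Finsupp.sub_apply, equivFinsuppOfBasisLeft_one_tmul_mul_mul_one_tmul,
      mul_one, one_mul]
  have hsub : (equivFinsuppOfBasisLeft ℬ z).support ⊂ (equivFinsuppOfBasisLeft ℬ y).support := by
    refine Finset.ssubset_iff_subset_ne.2 ⟨fun i ↦ ?_, fun h ↦ ?_⟩
    · simp only [Finsupp.mem_support_iff, hz]
      exact mt fun h ↦ by rw [h, mul_zero, zero_mul, sub_self]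
    · have : j₀ ∈ (equivFinsuppOfBasisLeft ℬ z).support := by simp [h, hj₀]
      simp [hz, hj₀] at this
  simpa [hmin z hzI hsub, sub_eq_zero] using (hz j).symm

theorem exists_eq_tmul_one_of_coeff_mem_bot (x : B ⊗[F] A)
    (h : ∀ j, equivFinsuppOfBasisLeft ℬ x j ∈ (⊥ : Subalgebra F A)) :
    ∃ b : B, x = b ⊗ₜ 1 := by
  choose c hc using fun j ↦ Algebra.mem_bot.1 (h j)
  refine ⟨(equivFinsuppOfBasisLeft ℬ x).sum fun j _ ↦ c j • ℬ j, ?_⟩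
  conv_lhs => rw [← (equivFinsuppOfBasisLeft ℬ).symm_apply_apply x,
    equivFinsuppOfBasisLeft_symm_apply]
  rw [Finsupp.sum, Finsupp.sum, sum_tmul]
  refine Finset.sum_congr rfl fun j _ ↦ ?_
  rw [← hc, Algebra.algebraMap_eq_smul_one, smul_tmul]

end Coefficients

section Simplicity

variable {F B A : Type*} [Field F] [Ring B] [Algebra F B] [Ring A] [Algebra F A]
  [Algebra.IsCentral F A] [IsSimpleRing A]

/-- Take `x ∈ I` nonzero with fewest coordinates in a basis of `B`, normalize one coefficient to
`1` using simplicity of `A`; minimality then forces every coefficient to be central, hence a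
scalar. -/
theorem exists_ne_zero_tmul_one_mem {I : TwoSidedIdeal (B ⊗[F] A)} (hI : I ≠ ⊥) :
    ∃ b : B, b ≠ 0 ∧ b ⊗ₜ[F] (1 : A) ∈ I := by
  classical
  let ℬ := Basis.ofVectorSpace F B
  let Φ := equivFinsuppOfBasisLeft (M := B) (N := A) ℬ
  have hne : {x | x ∈ I ∧ x ≠ 0}.Nonempty := by
    obtain ⟨x, hxI, hx⟩ := SetLike.exists_of_lt (bot_lt_iff_ne_bot.2 hI)
    exact ⟨x, hxI, by rintro rfl; exact hx (zero_mem _)⟩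
  obtain ⟨x, ⟨hxI, hx0⟩, hmin⟩ :=
    (measure fun x ↦ (Φ x).support.card).wf.has_min {x | x ∈ I ∧ x ≠ 0} hne
  obtain ⟨j₀, hj₀⟩ := Finsupp.support_nonempty_iff.2 (Φ.map_ne_zero_iff.2 hx0)
  obtain ⟨y, hyI, hyx, hy₁⟩ := exists_mem_coeff_eq_one ℬ hxI (Finsupp.mem_support_iff.1 hj₀)
  have hymin : ∀ z ∈ I, (Φ z).support ⊂ (Φ y).support → z = 0 := fun z hzI hz ↦
    by_contra fun hz0 ↦ hmin z ⟨hzI, hz0⟩ (Finset.card_lt_card (hz.trans_subset hyx))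
  obtain ⟨b, rfl⟩ := exists_eq_tmul_one_of_coeff_mem_bot ℬ y fun j ↦
    Algebra.IsCentral.out (coeff_mem_center_of_minimal ℬ hyI hy₁ hymin j)
  refine ⟨b, ?_, hyI⟩
  rintro rfl
  simp at hy₁

variable (F B A) in
theorem isSimpleRing [IsSimpleRing B] : IsSimpleRing (B ⊗[F] A) := by
  refine .of_eq_bot_or_eq_top fun I ↦ or_iff_not_imp_left.2 fun hI ↦ ?_
  obtain ⟨b, hb0, hbI⟩ := exists_ne_zero_tmul_one_mem hI
  have h1 : (1 : B) ∈ I.comap (includeLeft (S := F)) :=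
    IsSimpleRing.one_mem_of_ne_zero_mem _ hb0 ((TwoSidedIdeal.mem_comap _).2 hbI)
  exact I.one_mem_iff.1 ((TwoSidedIdeal.mem_comap _).1 h1)

end Simplicity

end Algebra.TensorProduct

theorem finrank_central_simple_is_square_general
    (F A : Type*) [Field F]
    [Ring A] [Algebra F A] [FiniteDimensional F A]
    [Algebra.IsCentral F A] [IsSimpleRing A] :
    ∃ q : ℕ, 0 < q ∧ Module.finrank F A = q ^ 2 := by
  let K := AlgebraicClosure F
  have := Algebra.TensorProduct.isSimpleRing F K A
  obtain ⟨n, hn, ⟨e⟩⟩ := IsSimpleRing.exists_algEquiv_matrix_of_isAlgClosed K (K ⊗[F] A)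
  refine ⟨n, Nat.pos_of_neZero n, ?_⟩
  rw [← Module.finrank_baseChange (R := K), e.toLinearEquiv.finrank_eq, Module.finrank_matrix,
    Module.finrank_self, mul_one, Fintype.card_fin, sq]

/-- The `F`-dimension of a central simple `F`-algebra is a perfect square. -/
theorem finrank_central_simple_is_square
    (F A : Type*) [Field F]
    [Ring A] [Algebra F A] [FiniteDimensional F A] [Nontrivial A]
    [Algebra.IsCentral F A] [IsSimpleRing A] :
    ∃ q : ℕ, 0 < q ∧ Module.finrank F A = q ^ 2 :=
  finrank_central_simple_is_square_general F A
end

section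
/- Let F be a field of characteristic different from 2 and A a central simple F-algebra with dim_F(A) = 4. Then A is a quaternion algebra: there exist nonzero elements a, b of F such that A is isomorphic as an F-algebra to the quaternion algebra H_F(a,b) with F-basis (1, α, β, αβ) and relations α² = a, β² = b, αβ = −βα. -/
/-!
By Wedderburn–Artin, `A ≃ Mₙ(D)` for a division algebra `D` with `n² · [D : F] = 4`. If `n = 2`,
the matrices `diag(1, -1)` and `[[0, 1], [1, 0]]` anticommute and square to `1`. If `n = 1`, `A` is a
division algebra; for `x ∉ F` the subfield `F[x]` has degree dividing `4`, and neither `1` nor `4`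
(otherwise `x` would be central), so completing the square in `F[x]` gives `i ∉ F` with `i² ∈ F`,
and `j = i z - z i` for any `z` not commuting with `i` anticommutes with `i`.

Given anticommuting `i, j` with `i² = a ≠ 0` and `j` invertible, `1, i, j, ij` are linearly
independent, hence a basis of `A`; so `i, j` generate `A`, and `j²`, which commutes with both, is a
nonzero scalar `b`. The quaternion basis `(i, j, ij)` then gives `ℍ[F, a, b] ≃ A`.
-/

open Module Quaternion

theorem Subalgebra.finrank_dvd_finrank {F D : Type*} [Field F] [Ring D] [IsDomain D]
    [Algebra F D] [FiniteDimensional F D] (K : Subalgebra F D) : finrank F K ∣ finrank F D := by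
  let := divisionRingOfFiniteDimensional F K
  exact ⟨_, (finrank_mul_finrank F K D).symm⟩

theorem Subalgebra.exists_notMem_bot_of_finrank_ne_one {F B : Type*} [Field F] [Ring B]
    [Nontrivial B] [Algebra F B] (hB : finrank F B ≠ 1) : ∃ x : B, x ∉ (⊥ : Subalgebra F B) := by
  by_contra! h
  exact hB (Subalgebra.bot_eq_top_iff_finrank_eq_one.mp (eq_top_iff.mpr fun x _ => h x))

theorem exists_notMem_bot_mul_self_mem_bot {F B : Type*} [Field F] [Ring B] [Algebra F B]
    (hchar : (2 : F) ≠ 0) (hB : finrank F B = 2) :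
    ∃ y : B, y ∉ (⊥ : Subalgebra F B) ∧ y * y ∈ (⊥ : Subalgebra F B) := by
  have : Nontrivial B := Module.nontrivial_of_finrank_eq_succ hB
  have : FiniteDimensional F B := .of_finrank_eq_succ hB
  obtain ⟨x, hx⟩ := Subalgebra.exists_notMem_bot_of_finrank_ne_one (F := F) (B := B) (by omega)
  have hli : LinearIndependent F ![1, x] := by
    refine (LinearIndependent.pair_iff' one_ne_zero).mpr fun c hc => hx ?_
    rw [← hc, ← Algebra.algebraMap_eq_smul_one]
    exact Subalgebra.algebraMap_mem _ c
  have hspan : Submodule.span F {1, x} = ⊤ := by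
    simpa [Matrix.range_cons, Matrix.range_empty, Set.pair_comm] using
      hli.span_eq_top_of_card_eq_finrank' (by rw [Fintype.card_fin, hB])
  obtain ⟨s, t, hst⟩ := Submodule.mem_span_pair.mp (hspan ▸ Submodule.mem_top (x := x * x))
  obtain ⟨c, rfl⟩ : ∃ c, t = 2 * c := ⟨t / 2, by field_simp⟩
  refine ⟨x - c • 1, fun h => hx ?_, Algebra.mem_bot.mpr ⟨s + c ^ 2, ?_⟩⟩
  · simpa [Algebra.algebraMap_eq_smul_one] using add_mem h (Subalgebra.algebraMap_mem ⊥ c)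
  · simp only [sub_mul, mul_sub, smul_mul_assoc, mul_smul_comm, one_mul, mul_one,
      Algebra.algebraMap_eq_smul_one, ← hst]
    module

section

variable {R A B : Type*} [CommRing R] [Ring A] [Ring B] [Algebra R A] [Algebra R B]

/-- `j` is only asked to be a unit: in a central algebra of dimension `4`, `j²` is then
automatically a nonzero scalar. -/
def IsQuaternionPair (a : R) (i j : A) : Prop :=
  i * i = a • 1 ∧ IsUnit j ∧ i * j = -(j * i)

theorem IsQuaternionPair.map {a : R} {i j : A} (h : IsQuaternionPair a i j) (f : A →ₐ[R] B) :
    IsQuaternionPair a (f i) (f j) := by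
  obtain ⟨hi, hj, hij⟩ := h
  exact ⟨by rw [← map_mul, hi, map_smul, map_one], hj.map f,
    by rw [← map_mul, hij, map_neg, map_mul]⟩

theorem Matrix.isQuaternionPair_one :
    IsQuaternionPair (1 : R) !![(1 : A), 0; 0, -1] !![(0 : A), 1; 1, 0] := by
  have hj : !![(0 : A), 1; 1, 0] * !![(0 : A), 1; 1, 0] = 1 := by simp [Matrix.one_fin_two]
  refine ⟨?_, isUnit_iff_exists.mpr ⟨_, hj, hj⟩, ?_⟩ <;> simp [Matrix.one_fin_two]

end

namespace IsQuaternionPair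

variable {F A : Type*} [Field F] [Ring A] [Algebra F A] {a : F} {i j : A}

theorem isUnit_fst (ha : a ≠ 0) (h : IsQuaternionPair a i j) : IsUnit i := by
  have h₁ : i * (a⁻¹ • i) = 1 := by
    rw [mul_smul_comm, h.1, smul_smul, inv_mul_cancel₀ ha, one_smul]
  have h₂ : (a⁻¹ • i) * i = 1 := by
    rw [smul_mul_assoc, h.1, smul_smul, inv_mul_cancel₀ ha, one_smul]
  exact isUnit_iff_exists.mpr ⟨_, h₁, h₂⟩

theorem commute_mul_self_snd (h : IsQuaternionPair a i j) : Commute i (j * j) := by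
  have hsc : SemiconjBy i j (-j) := by rw [SemiconjBy, h.2.2, neg_mul]
  simpa [Commute] using hsc.mul_right hsc

theorem eq_zero_of_add_mul_eq_zero (hchar : (2 : F) ≠ 0) (ha : a ≠ 0)
    (h : IsQuaternionPair a i j) {p q : A} (hp : Commute i p) (hq : Commute i q)
    (hpq : p + q * j = 0) : p = 0 ∧ q = 0 := by
  have hji : IsUnit (j * i) := h.2.1.mul (h.isUnit_fst ha)
  have hq0 : q = 0 := by
    have : (2 : F) • (q * (j * i)) = 0 := by
      calc (2 : F) • (q * (j * i)) = (p + q * j) * i - i * (p + q * j) := by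
            rw [add_mul, mul_add, hp.eq, ← mul_assoc i, hq.eq, mul_assoc q i, h.2.2, mul_assoc,
              mul_neg, two_smul]
            abel
        _ = 0 := by rw [hpq, zero_mul, mul_zero, sub_zero]
    simpa [hchar, hji.mul_left_eq_zero] using this
  exact ⟨by simpa [hq0] using hpq, hq0⟩

variable [Nontrivial A]

theorem smul_one_ne (hchar : (2 : F) ≠ 0) (ha : a ≠ 0) (h : IsQuaternionPair a i j) (c : F) :
    c • 1 ≠ i := by
  obtain ⟨hi, hj, hij⟩ := h
  rintro rfl
  simp only [smul_mul_assoc, mul_smul_comm, one_mul, mul_one] at hi hij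
  have hc : (2 * c) • j = 0 := by rw [mul_smul, two_smul, eq_neg_iff_add_eq_zero.mp hij]
  obtain rfl : c = 0 := by simpa [hchar, hj.ne_zero] using hc
  exact ha (by simpa using hi.symm)

theorem linearIndependent (hchar : (2 : F) ≠ 0) (ha : a ≠ 0)
    (h : IsQuaternionPair a i j) : LinearIndependent F ![1, i, j, i * j] := by
  have h1i := LinearIndependent.pair_iff.mp <|
    (LinearIndependent.pair_iff' one_ne_zero).mpr (h.smul_one_ne hchar ha)
  have hcomm (s t : F) : Commute i (s • 1 + t • i) :=
    ((Commute.one_right i).smul_right s).add_right ((Commute.refl i).smul_right t)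
  rw [Fintype.linearIndependent_iff]
  intro g hg
  simp only [Fin.sum_univ_four, Matrix.cons_val] at hg
  obtain ⟨hp, hq⟩ := h.eq_zero_of_add_mul_eq_zero hchar ha (hcomm (g 0) (g 1))
    (hcomm (g 2) (g 3)) (by rw [← hg]; simp only [add_mul, smul_mul_assoc, one_mul]; abel)
  obtain ⟨h0, h1⟩ := h1i _ _ hp
  obtain ⟨h2, h3⟩ := h1i _ _ hq
  intro k
  fin_cases k <;> assumption

variable [FiniteDimensional F A]

theorem exists_mul_self_snd_eq_smul_one [Algebra.IsCentral F A] (hchar : (2 : F) ≠ 0)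
    (ha : a ≠ 0) (hdim : finrank F A = 4) (h : IsQuaternionPair a i j) :
    ∃ b : F, b ≠ 0 ∧ j * j = b • 1 := by
  have hspan := (h.linearIndependent hchar ha).span_eq_top_of_card_eq_finrank'
    (by rw [Fintype.card_fin, hdim])
  have hcent : ⊤ ≤ Subalgebra.toSubmodule (Subalgebra.centralizer F {j * j}) := by
    rw [← hspan, Submodule.span_le, Set.range_subset_iff]
    have hi : Commute (j * j) i := h.commute_mul_self_snd.symm
    have hj : Commute (j * j) j := (Commute.refl j).mul_left (Commute.refl j)
    intro k
    fin_cases k <;> simp [Set.mem_centralizer_iff, hi.eq, hj.eq, (hi.mul_right hj).eq]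
  obtain ⟨b, hb⟩ := (Algebra.IsCentral.mem_center_iff F).mp <|
    Subalgebra.mem_center_iff.mpr fun x => by
      simpa [Subalgebra.mem_centralizer_iff, eq_comm] using hcent (Submodule.mem_top (x := x))
  refine ⟨b, fun hb0 => (h.2.1.mul h.2.1).ne_zero ?_, by rw [hb, Algebra.algebraMap_eq_smul_one]⟩
  rw [hb, hb0, map_zero]

theorem nonempty_algEquiv_quaternionAlgebra (hchar : (2 : F) ≠ 0) (ha : a ≠ 0) {b : F}
    (hdim : finrank F A = 4) (h : IsQuaternionPair a i j) (hj : j * j = b • 1) :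
    Nonempty (A ≃ₐ[F] ℍ[F, a, b]) := by
  let q : QuaternionAlgebra.Basis A a 0 b :=
    { i, j, k := i * j, i_mul_i := by rw [h.1, zero_smul, add_zero], j_mul_j := hj,
      i_mul_j := rfl, j_mul_i := by rw [h.2.2, zero_smul, zero_sub, neg_neg] }
  have hq : q.liftHom.toLinearMap =
      (QuaternionAlgebra.basisOneIJK a 0 b).constr F ![1, i, j, i * j] := by
    refine (QuaternionAlgebra.basisOneIJK a 0 b).ext fun k => ?_
    fin_cases k <;>
      simp [QuaternionAlgebra.basisOneIJK, q, QuaternionAlgebra.Basis.lift, Fin.sum_univ_four]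
  have hinj : Function.Injective q.liftHom := by
    have := (QuaternionAlgebra.basisOneIJK a 0 b).injective_constr_of_linearIndependent
      (R₂ := F) (h.linearIndependent hchar ha)
    rwa [← hq, AlgHom.coe_toLinearMap] at this
  have hsurj := (LinearMap.injective_iff_surjective_of_finrank_eq_finrank
    (by rw [QuaternionAlgebra.finrank_eq_four, hdim]) (f := q.liftHom.toLinearMap)).mp hinj
  exact ⟨(AlgEquiv.ofBijective q.liftHom ⟨hinj, hsurj⟩).symm⟩

end IsQuaternionPair

theorem finrank_adjoin_singleton_eq_two {F D : Type*} [Field F] [DivisionRing D] [Algebra F D]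
    [FiniteDimensional F D] [Algebra.IsCentral F D] (hdim : finrank F D = 4) {x : D}
    (hx : x ∉ (⊥ : Subalgebra F D)) : finrank F (Algebra.adjoin F {x}) = 2 := by
  set K := Algebra.adjoin F {x}
  have hK_ne_one : finrank F K ≠ 1 := fun h =>
    hx (Subalgebra.eq_bot_of_finrank_one h ▸ Algebra.self_mem_adjoin_singleton F x)
  have hK_ne_four : finrank F K ≠ 4 := fun h => by
    have hK : K = ⊤ := Algebra.toSubmodule_eq_top.1 <|
      Submodule.eq_top_of_finrank_eq <| K.finrank_toSubmodule.trans (h.trans hdim.symm)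
    refine hx (Algebra.IsCentral.center_eq_bot F D ▸ Subalgebra.mem_center_iff.mpr fun y => ?_)
    exact (Algebra.commute_of_mem_adjoin_self (hK ▸ Algebra.mem_top)).symm
  have hdvd := hdim ▸ K.finrank_dvd_finrank
  have := Nat.le_of_dvd (by norm_num) hdvd
  interval_cases h : finrank F K <;> simp_all

theorem exists_isQuaternionPair_of_divisionRing (F D : Type*) [Field F] [DivisionRing D]
    [Algebra F D] [FiniteDimensional F D] [Algebra.IsCentral F D] (hchar : (2 : F) ≠ 0)
    (hdim : finrank F D = 4) : ∃ (a : F) (i j : D), a ≠ 0 ∧ IsQuaternionPair a i j := by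
  obtain ⟨x, hx⟩ := Subalgebra.exists_notMem_bot_of_finrank_ne_one (F := F) (B := D) (by omega)
  obtain ⟨y, hy, hyy⟩ :=
    exists_notMem_bot_mul_self_mem_bot hchar (finrank_adjoin_singleton_eq_two hdim hx)
  obtain ⟨a, ha⟩ := Algebra.mem_bot.mp hyy
  have hi : (y : D) * y = a • 1 := by
    rw [← Algebra.algebraMap_eq_smul_one]
    exact congrArg Subtype.val ha.symm
  obtain ⟨z, hz⟩ : ∃ z : D, (y : D) * z ≠ z * y := by
    by_contra! h
    obtain ⟨c, hc⟩ := (Algebra.IsCentral.mem_center_iff F).mp <|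
      Subalgebra.mem_center_iff.mpr fun z => (h z).symm
    exact hy (Algebra.mem_bot.mpr ⟨c, Subtype.ext hc.symm⟩)
  refine ⟨a, y, y * z - z * y, fun ha0 => hz ?_, hi, (sub_ne_zero.mpr hz).isUnit, ?_⟩
  · rw [ha0, zero_smul, mul_self_eq_zero] at hi
    simp [hi]
  · calc (y : D) * (y * z - z * y) = a • z - y * z * y := by
          rw [mul_sub, ← mul_assoc, hi, smul_mul_assoc, one_mul, mul_assoc]
      _ = -((y * z - z * y) * y) := by
          rw [sub_mul, mul_assoc z, hi, mul_smul_comm, mul_one, neg_sub]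

theorem exists_isQuaternionPair (F A : Type*) [Field F] [Ring A] [Algebra F A]
    [FiniteDimensional F A] [Algebra.IsCentral F A] [IsSimpleRing A] (hchar : (2 : F) ≠ 0)
    (hdim : finrank F A = 4) : ∃ (a : F) (i j : A), a ≠ 0 ∧ IsQuaternionPair a i j := by
  have : IsArtinianRing A := .of_finite F A
  obtain ⟨n, hn, D, _, _, _, ⟨e⟩⟩ := IsSimpleRing.exists_algEquiv_matrix_divisionRing_finite F A
  have hnD : n * n * finrank F D = 4 := by
    rw [← hdim, e.toLinearEquiv.finrank_eq, finrank_matrix, Fintype.card_fin]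
  obtain rfl | rfl : n = 1 ∨ n = 2 := by
    have : n * n ≤ 4 := hnD ▸ Nat.le_mul_of_pos_right _ finrank_pos
    have : n ≠ 0 := NeZero.ne n
    have : n ≤ 2 := by nlinarith
    omega
  · -- `convert` bridges the `Fintype (Fin 1)` instance and the one `Matrix.uniqueAlgEquiv` uses.
    let e' : A ≃ₐ[F] D :=
      e.trans (by convert Matrix.uniqueAlgEquiv (m := Fin 1) (R := F) (A := D))
    have : Algebra.IsCentral F D := .of_algEquiv F A D e'
    obtain ⟨a, i, j, ha, h⟩ := exists_isQuaternionPair_of_divisionRing F D hchar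
      (by rw [← e'.toLinearEquiv.finrank_eq, hdim])
    exact ⟨a, _, _, ha, h.map e'.symm.toAlgHom⟩
  · exact ⟨1, _, _, one_ne_zero, Matrix.isQuaternionPair_one.map e.symm.toAlgHom⟩

theorem central_simple_dim_four_is_quaternion_general
    (F A : Type*) [Field F] (hchar : (2 : F) ≠ 0)
    [Ring A] [Algebra F A] [FiniteDimensional F A]
    [Algebra.IsCentral F A] [IsSimpleRing A]
    (hdim : Module.finrank F A = 4) :
    ∃ a b : F, a ≠ 0 ∧ b ≠ 0 ∧ Nonempty (A ≃ₐ[F] ℍ[F, a, b]) := by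
  obtain ⟨a, i, j, ha, h⟩ := exists_isQuaternionPair F A hchar hdim
  obtain ⟨b, hb, hj⟩ := h.exists_mul_self_snd_eq_smul_one hchar ha hdim
  exact ⟨a, b, ha, hb, h.nonempty_algEquiv_quaternionAlgebra hchar ha hdim hj⟩

/-- Over a field `F` of characteristic `≠ 2`, every central simple `F`-algebra of
dimension `4` is a quaternion algebra `ℍ[F, a, b]` with `a`, `b` nonzero. -/
theorem central_simple_dim_four_is_quaternion
    (F A : Type*) [Field F] (hchar : (2 : F) ≠ 0)
    [Ring A] [Algebra F A] [FiniteDimensional F A] [Nontrivial A]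
    [Algebra.IsCentral F A] [IsSimpleRing A]
    (hdim : Module.finrank F A = 4) :
    ∃ a b : F, a ≠ 0 ∧ b ≠ 0 ∧ Nonempty (A ≃ₐ[F] ℍ[F, a, b]) :=
  central_simple_dim_four_is_quaternion_general F A hchar hdim
end

section
/- Let F be a field of characteristic different from 2 which satisfies Property A₂, i.e., every quaternion algebra H_F(a,b) with a, b nonzero in F is isomorphic as an F-algebra to M₂(F). Let K be any quadratic field extension of F (a field extension with dim_F(K) = 2). Then K also satisfies Property A₂: every quaternion algebra H_K(a,b) with a, b nonzero in K is isomorphic as a K-algebra to M₂(K). -/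
/-!
Fix a nonzero `F`-linear functional `ℓ : K → F`. For `g ≠ 0` in `K` the transfer
`x ↦ ℓ (g x²)` is a nondegenerate binary form over `F`, and since such forms over `F` are
universal it has an orthogonal basis `U, V` with `ℓ (g U²) = 1`. Combining these bases for
`g = 1, a, b, ab` gives a three-dimensional `F`-subspace of `ℍ[K,a,b]` on which `ℓ` of the norm
form vanishes identically. For a functional `ℓ'` independent of `ℓ`, `ℓ'` of the norm form is a
ternary quadratic form over `F` on that subspace, hence isotropic; a nonzero zero of it is a
nonzero quaternion of norm zero, and a quaternion algebra containing one is split.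
-/

open Quaternion
open QuadraticMap Module

def BinaryFormsUniversal (F : Type*) [Field F] : Prop :=
  ∀ u v r : F, u ≠ 0 → v ≠ 0 → ∃ x y : F, u * x ^ 2 + v * y ^ 2 = r

section BinaryFormsUniversal

variable {F M : Type*} [Field F] [AddCommGroup M] [Module F M] [FiniteDimensional F M]

theorem LinearMap.BilinForm.exists_orthogonal_basis_fin (h2 : (2 : F) ≠ 0) {n : ℕ}
    (hM : finrank F M = n) {B : LinearMap.BilinForm F M} (hB : LinearMap.IsSymm B) :
    ∃ v : Basis (Fin n) F M, B.IsOrthoᵢ v := by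
  have := invertibleOfNonzero h2
  subst hM
  exact exists_orthogonal_basis hB

variable (h2 : (2 : F) ≠ 0) (huniv : BinaryFormsUniversal F)
include h2 huniv

theorem LinearMap.BilinForm.exists_apply_self_eq_one (hM : finrank F M = 2)
    {B : LinearMap.BilinForm F M} (hB : LinearMap.IsSymm B) (hB' : B.SeparatingLeft) :
    ∃ U V : M, B U U = 1 ∧ B U V = 0 ∧ B V V ≠ 0 := by
  obtain ⟨v, hv⟩ := exists_orthogonal_basis_fin h2 hM hB
  have hw := hv.not_isOrtho_basis_self_of_separatingLeft hB'
  have h01 : B (v 0) (v 1) = 0 := hv (by decide)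
  have h10 : B (v 1) (v 0) = 0 := hv (by decide)
  obtain ⟨x, y, hxy⟩ := huniv _ _ 1 (hw 0) (hw 1)
  refine ⟨x • v 0 + y • v 1, (-(B (v 1) (v 1) * y)) • v 0 + (B (v 0) (v 0) * x) • v 1,
    ?_, ?_, ?_⟩ <;>
    simp only [map_add, map_smul, LinearMap.add_apply, LinearMap.smul_apply, smul_eq_mul, h01, h10]
  · linear_combination hxy
  · ring
  · convert mul_ne_zero (hw 0) (hw 1) using 1
    linear_combination (B (v 0) (v 0) * B (v 1) (v 1)) * hxy

theorem QuadraticForm.not_anisotropic_of_finrank_eq_three (hM : finrank F M = 3)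
    (Q : QuadraticForm F M) : ¬Q.Anisotropic := by
  have := invertibleOfNonzero h2
  obtain ⟨v, hv⟩ := LinearMap.BilinForm.exists_orthogonal_basis_fin h2 hM
    (associated_isSymm F Q)
  have hQ (x : Fin 3 → F) : Q (∑ i, x i • v i) = ∑ i, Q (v i) * (x i * x i) := by
    rw [← basisRepr_apply, basisRepr_eq_of_iIsOrtho Q v hv, weightedSumSquares_apply]
    rfl
  rw [not_anisotropic_iff_exists]
  by_cases hw : ∃ i, Q (v i) = 0
  · obtain ⟨i, hi⟩ := hw
    exact ⟨v i, v.ne_zero i, hi⟩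
  push Not at hw
  obtain ⟨x, y, hxy⟩ := huniv _ _ (-Q (v 2)) (hw 0) (hw 1)
  refine ⟨v.equivFun.symm ![x, y, 1], fun h => ?_, ?_⟩
  · simpa using congrFun (v.equivFun.symm.injective (h.trans (map_zero _).symm)) 2
  · rw [Basis.equivFun_symm_apply, hQ, Fin.sum_univ_three]
    simp only [Matrix.cons_val]
    linear_combination hxy

end BinaryFormsUniversal

namespace QuaternionAlgebra

variable {k : Type*} [Field k] {a b : k}

variable (a b) in
def normForm : QuadraticForm k ℍ[k,a,b] :=
  (weightedSumSquares k ![1, -a, -b, a * b]).comp (linearEquivTuple a 0 b).toLinearMap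

theorem normForm_apply (u : ℍ[k,a,b]) :
    normForm a b u = u.re ^ 2 - a * u.imI ^ 2 - b * u.imJ ^ 2 + a * b * u.imK ^ 2 := by
  simp only [normForm, comp_apply, LinearEquiv.coe_coe, coe_linearEquivTuple, equivTuple_apply,
    weightedSumSquares_apply, Fin.sum_univ_four, smul_eq_mul, Matrix.cons_val]
  ring

theorem star_mul_self_eq_normForm (u : ℍ[k,a,b]) : star u * u = normForm a b u := by
  rw [star_mul_eq_coe, normForm_apply]
  congr 1
  simp only [re_mul, re_star, imI_star, imJ_star, imK_star]
  ring

theorem normForm_eq_zero_of_mul_self_eq_zero {u : ℍ[k,a,b]} (hu : u ≠ 0) (huu : u * u = 0) :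
    normForm a b u = 0 := by
  have : normForm a b u • u = 0 := by
    rw [← coe_mul_eq_smul, ← star_mul_self_eq_normForm, mul_assoc, huu, mul_zero]
  exact (smul_eq_zero.mp this).resolve_right hu

theorem not_anisotropic_normForm_of_algEquiv (e : ℍ[k,a,b] ≃ₐ[k] Matrix (Fin 2) (Fin 2) k) :
    ¬(normForm a b).Anisotropic := by
  have hE : !![(0 : k), 1; 0, 0] ≠ 0 := fun h => by simpa using congrFun (congrFun h 0) 1
  rw [not_anisotropic_iff_exists]
  refine ⟨e.symm !![0, 1; 0, 0], by simpa using hE,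
    normForm_eq_zero_of_mul_self_eq_zero (by simpa using hE) ?_⟩
  rw [← map_mul, Matrix.mul_fin_two]
  simpa using (Matrix.eta_fin_two (0 : Matrix (Fin 2) (Fin 2) k)).symm

theorem sq_sub_mul_sq_ne_zero (ha : ¬IsSquare a) {x y : k} (hxy : x ≠ 0 ∨ y ≠ 0) :
    x ^ 2 - a * y ^ 2 ≠ 0 := by
  intro h
  rcases eq_or_ne y 0 with rfl | hy
  · exact hxy.elim (fun hx => hx (by simpa using h)) (fun h' => h' rfl)
  · exact ha ⟨x / y, by field_simp; linear_combination -h⟩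

theorem exists_sq_sub_mul_sq_eq_of_not_anisotropic (h2 : (2 : k) ≠ 0) (ha : a ≠ 0)
    (h : ¬(normForm a b).Anisotropic) : ∃ p q : k, p ^ 2 - a * q ^ 2 = b := by
  by_cases hsq : IsSquare a
  · obtain ⟨c, rfl⟩ := hsq
    have hc : c ≠ 0 := by rintro rfl; simp at ha
    exact ⟨(1 + b) / 2, (b - 1) / (2 * c), by field_simp; ring⟩
  obtain ⟨u, hu, hnorm⟩ := (not_anisotropic_iff_exists _).mp h
  rw [normForm_apply] at hnorm
  have hJK : u.imJ ^ 2 - a * u.imK ^ 2 ≠ 0 := by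
    refine sq_sub_mul_sq_ne_zero hsq (not_and_or.mp fun ⟨hJ, hK⟩ => ?_)
    have hRI : u.re ^ 2 - a * u.imI ^ 2 = 0 := by simpa [hJ, hK] using hnorm
    by_cases hRI' : u.re = 0 ∧ u.imI = 0
    · exact hu (QuaternionAlgebra.ext hRI'.1 hRI'.2 hJ hK)
    · exact sq_sub_mul_sq_ne_zero hsq (not_and_or.mp hRI') hRI
  -- `b` is the norm from `k(√a)` of `(re + imI √a) / (imJ + imK √a)`.
  refine ⟨(u.re * u.imJ + a * u.imI * u.imK) / (u.imJ ^ 2 - a * u.imK ^ 2),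
    (u.re * u.imK + u.imI * u.imJ) / (u.imJ ^ 2 - a * u.imK ^ 2), ?_⟩
  field_simp
  linear_combination (u.imJ ^ 2 - a * u.imK ^ 2) * hnorm

theorem nonempty_algEquiv_matrix_of_sq_sub_mul_sq_eq (h2 : (2 : k) ≠ 0) (ha : a ≠ 0)
    (hb : b ≠ 0) {p q : k} (h : p ^ 2 - a * q ^ 2 = b) :
    Nonempty (ℍ[k,a,b] ≃ₐ[k] Matrix (Fin 2) (Fin 2) k) := by
  let B : Basis (Matrix (Fin 2) (Fin 2) k) a 0 b :=
    { i := !![0, 1; a, 0]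
      j := !![p, q; -(a * q), -p]
      k := !![0, 1; a, 0] * !![p, q; -(a * q), -p]
      i_mul_i := by simp [Matrix.one_fin_two]
      j_mul_j := by
        rw [Matrix.mul_fin_two, Matrix.one_fin_two, ← h, Matrix.smul_of]
        congr 1
        simp only [Matrix.smul_cons, smul_eq_mul, Matrix.smul_empty]
        ring_nf
      i_mul_j := rfl
      j_mul_i := by simp [mul_comm] }
  have htrace (w : ℍ[k,a,b]) : (B.liftHom w).trace = 2 * w.re := by
    simp [Basis.liftHom, Basis.lift, B, Matrix.trace_fin_two, Matrix.algebraMap_matrix_apply,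
      two_mul]
  -- An element of the kernel is orthogonal to everything for the nondegenerate form
  -- `(u, w) ↦ (u * w).re`, since the trace of `B.liftHom w` is `2 * w.re`.
  have hinj : Function.Injective B.liftHom := by
    rw [injective_iff_map_eq_zero]
    intro u hu
    have hre (w : ℍ[k,a,b]) : (u * w).re = 0 := by
      have := htrace (u * w)
      rw [map_mul, hu, zero_mul, Matrix.trace_zero] at this
      exact (mul_eq_zero.mp this.symm).resolve_left h2
    have h1 := hre 1
    have hI := hre ⟨0, 1, 0, 0⟩
    have hJ := hre ⟨0, 0, 1, 0⟩
    have hK := hre ⟨0, 0, 0, 1⟩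
    simp only [mul_one, re_mul, mul_zero, zero_add, add_zero, zero_mul, sub_zero, zero_sub,
      neg_eq_zero, mul_eq_zero] at h1 hI hJ hK
    ext <;> simp_all
  have hsurj : Function.Surjective B.liftHom :=
    (LinearMap.injective_iff_surjective_of_finrank_eq_finrank (f := B.liftHom.toLinearMap)
      (by simp [finrank_eq_four, Module.finrank_matrix])).mp hinj
  exact ⟨AlgEquiv.ofBijective _ ⟨hinj, hsurj⟩⟩

theorem nonempty_algEquiv_matrix_of_not_anisotropic (h2 : (2 : k) ≠ 0) (ha : a ≠ 0)
    (hb : b ≠ 0) (h : ¬(normForm a b).Anisotropic) :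
    Nonempty (ℍ[k,a,b] ≃ₐ[k] Matrix (Fin 2) (Fin 2) k) :=
  let ⟨_, _, hpq⟩ := exists_sq_sub_mul_sq_eq_of_not_anisotropic h2 ha h
  nonempty_algEquiv_matrix_of_sq_sub_mul_sq_eq h2 ha hb hpq

end QuaternionAlgebra

open QuaternionAlgebra in
theorem binaryFormsUniversal_of_forall_nonempty_algEquiv {F : Type*} [Field F]
    (h2 : (2 : F) ≠ 0)
    (hF : ∀ a b : F, a ≠ 0 → b ≠ 0 → Nonempty (ℍ[F, a, b] ≃ₐ[F] Matrix (Fin 2) (Fin 2) F)) :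
    BinaryFormsUniversal F := by
  intro u v r hu hv
  rcases eq_or_ne r 0 with rfl | hr
  · exact ⟨0, 0, by ring⟩
  have hvu : -v / u ≠ 0 := div_ne_zero (neg_ne_zero.mpr hv) hu
  obtain ⟨e⟩ := hF (-v / u) (r / u) hvu (div_ne_zero hr hu)
  obtain ⟨p, q, hpq⟩ :=
    exists_sq_sub_mul_sq_eq_of_not_anisotropic h2 hvu (not_anisotropic_normForm_of_algEquiv e)
  refine ⟨p, q, ?_⟩
  field_simp at hpq
  linear_combination hpq

section Transfer

variable {F K : Type*} [Field F] [Field K] [Algebra F K] (ℓ : K →ₗ[F] F)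

/-- Scharlau's transfer `ℓ_*⟨g⟩` of the one-dimensional form `⟨g⟩` over `K`. -/
def transferForm (g : K) : LinearMap.BilinForm F K :=
  (LinearMap.mul F K).compr₂ ℓ ∘ₗ LinearMap.mulLeft F g

@[simp]
theorem transferForm_apply (g x y : K) : transferForm ℓ g x y = ℓ (g * x * y) := by
  simp [transferForm, mul_assoc]

theorem transferForm_isSymm (g : K) : LinearMap.IsSymm (transferForm ℓ g) :=
  ⟨fun x y => by simp [mul_right_comm]⟩

theorem transferForm_separatingLeft (hℓ : ℓ ≠ 0) {g : K} (hg : g ≠ 0) :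
    (transferForm ℓ g).SeparatingLeft := by
  intro x hx
  by_contra hx0
  obtain ⟨z, hz⟩ : ∃ z, ℓ z ≠ 0 := by
    by_contra! h
    exact hℓ (LinearMap.ext h)
  apply hz
  simpa [mul_div_cancel₀ _ (mul_ne_zero hg hx0)] using hx (z / (g * x))

theorem exists_transferForm_eq_one (h2 : (2 : F) ≠ 0) (huniv : BinaryFormsUniversal F)
    (hK : finrank F K = 2) (hℓ : ℓ ≠ 0) {g : K} (hg : g ≠ 0) :
    ∃ U V : K, ℓ (g * U * U) = 1 ∧ ℓ (g * U * V) = 0 ∧ ℓ (g * V * V) ≠ 0 := by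
  have : FiniteDimensional F K := Module.finite_of_finrank_eq_succ hK
  simpa using (transferForm ℓ g).exists_apply_self_eq_one h2 huniv hK
    (transferForm_isSymm ℓ g) (transferForm_separatingLeft ℓ hℓ hg)

theorem map_mul_smul_add_smul_sq {g U V : K} (h : ℓ (g * U * V) = 0) (x y : F) :
    ℓ (g * (x • U + y • V) ^ 2) = x ^ 2 * ℓ (g * U * U) + y ^ 2 * ℓ (g * V * V) := by
  have : g * (x • U + y • V) ^ 2 =
      x ^ 2 • (g * U * U) + (2 * x * y) • (g * U * V) + y ^ 2 • (g * V * V) := by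
    simp only [Algebra.smul_def, map_pow, map_mul, map_ofNat]
    ring
  simp [this, h]

theorem QuaternionAlgebra.exists_injective_forall_map_normForm_eq_zero (h2 : (2 : F) ≠ 0)
    (huniv : BinaryFormsUniversal F) (hK : finrank F K = 2) (hℓ : ℓ ≠ 0) {a b : K}
    (ha : a ≠ 0) (hb : b ≠ 0) :
    ∃ v : (Fin 3 → F) →ₗ[F] ℍ[K,a,b],
      Function.Injective v ∧ ∀ c, ℓ (normForm a b (v c)) = 0 := by
  obtain ⟨U₁, V₁, hU₁, hUV₁, hV₁⟩ := exists_transferForm_eq_one ℓ h2 huniv hK hℓ one_ne_zero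
  obtain ⟨U₂, V₂, hU₂, hUV₂, hV₂⟩ := exists_transferForm_eq_one ℓ h2 huniv hK hℓ ha
  obtain ⟨U₃, V₃, hU₃, hUV₃, hV₃⟩ := exists_transferForm_eq_one ℓ h2 huniv hK hℓ hb
  obtain ⟨U₄, -, hU₄, -, -⟩ :=
    exists_transferForm_eq_one ℓ h2 huniv hK hℓ (mul_ne_zero ha hb)
  simp only [one_mul] at hU₁ hUV₁ hV₁
  obtain ⟨s, t, hst⟩ := huniv _ _ (ℓ (b * V₃ * V₃)) hV₁ (neg_ne_zero.mpr hV₂)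
  -- The `U`-parts cancel in pairs since `ℓ (g U²) = 1` for all four `g`; `s, t` cancel the rest.
  let v := Fintype.linearCombination F
    ![(⟨U₁, U₂, 0, 0⟩ : ℍ[K,a,b]), ⟨0, 0, U₃, U₄⟩, ⟨s • V₁, t • V₂, V₃, 0⟩]
  have hv (c : Fin 3 → F) : v c =
      ⟨c 0 • U₁ + (c 2 * s) • V₁, c 0 • U₂ + (c 2 * t) • V₂, c 1 • U₃ + c 2 • V₃, c 1 • U₄⟩ := by
    simp [v, Fintype.linearCombination_apply, Fin.sum_univ_three, mul_smul]
  refine ⟨v, ?_, fun c => ?_⟩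
  · have hU₁0 : U₁ ≠ 0 := by rintro rfl; simp at hU₁
    have hV₃0 : V₃ ≠ 0 := by rintro rfl; simp at hV₃
    have hU₄0 : U₄ ≠ 0 := by rintro rfl; simp at hU₄
    rw [injective_iff_map_eq_zero]
    intro c hc
    rw [hv, QuaternionAlgebra.ext_iff] at hc
    obtain ⟨h₀, -, h₂, h₁⟩ := hc
    have hc₁ : c 1 = 0 := by simpa [hU₄0] using h₁
    have hc₂ : c 2 = 0 := by simpa [hc₁, hV₃0] using h₂
    have hc₀ : c 0 = 0 := by simpa [hc₂, hU₁0] using h₀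
    ext i
    fin_cases i <;> assumption
  · have hT := map_mul_smul_add_smul_sq ℓ (g := 1) (by simpa using hUV₁) (c 0) (c 2 * s)
    have hX := map_mul_smul_add_smul_sq ℓ hUV₂ (c 0) (c 2 * t)
    have hY := map_mul_smul_add_smul_sq ℓ hUV₃ (c 1) (c 2)
    have hZ := map_mul_smul_add_smul_sq ℓ (g := a * b) (U := U₄) (V := 0) (by simp) (c 1) 0
    simp only [one_mul, smul_zero, add_zero, zero_pow two_ne_zero, zero_mul] at hT hZ
    rw [hv, normForm_apply, map_add, map_sub, map_sub, hT, hX, hY, hZ, hU₁, hU₂, hU₃, hU₄]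
    linear_combination (c 2) ^ 2 * hst

theorem QuaternionAlgebra.not_anisotropic_normForm_of_finrank_eq_two (h2 : (2 : F) ≠ 0)
    (huniv : BinaryFormsUniversal F) (hK : finrank F K = 2) {a b : K} (ha : a ≠ 0)
    (hb : b ≠ 0) : ¬(normForm a b).Anisotropic := by
  have : FiniteDimensional F K := Module.finite_of_finrank_eq_succ hK
  let e := Module.finBasisOfFinrankEq F K hK
  obtain ⟨v, hv, hv₀⟩ := exists_injective_forall_map_normForm_eq_zero (e.coord 0) h2 huniv hK
    (fun h => by simpa using LinearMap.congr_fun h (e 0)) ha hb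
  obtain ⟨c, hc, hc₁⟩ := (not_anisotropic_iff_exists _).mp
    (QuadraticForm.not_anisotropic_of_finrank_eq_three h2 huniv (by simp)
      (((e.coord 1).compQuadraticMap' (normForm a b)).comp v))
  rw [not_anisotropic_iff_exists]
  refine ⟨v c, fun h => hc (hv (h.trans (map_zero v).symm)), e.ext_elem fun i => ?_⟩
  fin_cases i
  · simpa using hv₀ c
  · simpa using hc₁

end Transfer

/-- If every quaternion algebra over `F` (of characteristic `≠ 2`) is split, then
the same holds over any quadratic field extension `K` of `F`. -/
theorem propertyA2_quadratic_extension
    (F K : Type*) [Field F] (hchar : (2 : F) ≠ 0)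
    (hF : ∀ a b : F, a ≠ 0 → b ≠ 0 →
      Nonempty (ℍ[F, a, b] ≃ₐ[F] Matrix (Fin 2) (Fin 2) F))
    [Field K] [Algebra F K] (hK : Module.finrank F K = 2) :
    ∀ a b : K, a ≠ 0 → b ≠ 0 →
      Nonempty (ℍ[K, a, b] ≃ₐ[K] Matrix (Fin 2) (Fin 2) K) := by
  intro a b ha hb
  have huniv := binaryFormsUniversal_of_forall_nonempty_algEquiv hchar hF
  have h2K : (2 : K) ≠ 0 := by
    rw [← map_ofNat (algebraMap F K)]
    exact (map_ne_zero _).mpr hchar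
  exact QuaternionAlgebra.nonempty_algEquiv_matrix_of_not_anisotropic h2K ha hb
    (QuaternionAlgebra.not_anisotropic_normForm_of_finrank_eq_two hchar huniv hK ha hb)
end
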